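/- arXiv:0903.1025 — 8 statements merged into one kernel-verified Lean document; each statement's English description precedes it below -/
import Mathlib

section
/- Under the stated hypotheses, the function t ↦ e^{z(t)}/Δ(t) tends to 0 as t → b⁻; consequently this function extends continuously to [c,b] and the integral L := ∫_c^b e^{z(t)}/Δ(t) dt is finite. -/
/-! With `φ = z - log Δ` one has `exp z / Δ = exp φ` and `φ' = -κ / Δ² - Δ' / Δ`, `κ = 2 / σ²`.
Since `Δ'` is bounded by some `M` and `Δ b = 0`, near `b` we have `2 M Δ ≤ κ`, so the first term
dominates: `φ' ≤ -κ / (2 Δ²) ≤ -C / (b - t)²` because `Δ t ≤ M (b - t)`. Hence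
`φ + C / (b - t)` decreases, `φ → -∞` and `exp z / Δ → 0`; extending by `0` at `b` gives a
function continuous on `[c, b]`, hence integrable. -/

open Real Filter Set Topology intervalIntegral

lemma hasDerivAt_integral_of_continuousOn_Ioo {f : ℝ → ℝ} {a b c x : ℝ}
    (hf : ContinuousOn f (Ioo a b)) (hc : c ∈ Ioo a b) (hx : x ∈ Ioo a b) :
    HasDerivAt (fun u => ∫ t in c..u, f t) (f x) x :=
  integral_hasDerivAt_right
    ((hf.mono (ordConnected_Ioo.uIcc_subset hc hx)).intervalIntegrable)
    (hf.stronglyMeasurableAtFilter isOpen_Ioo x hx)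
    (hf.continuousAt (isOpen_Ioo.mem_nhds hx))

lemma neg_div_sq_sub_div_le {κ M D d u : ℝ} (hD : 0 < D) (hd : |d| ≤ M)
    (hsmall : 2 * M * D ≤ κ) (hDu : D ≤ M * u) :
    -κ / D ^ 2 - d / D ≤ -(κ / (2 * M ^ 2)) / u ^ 2 := by
  have hM : 0 < M := by
    by_contra! h
    have hM0 : M = 0 := le_antisymm h ((abs_nonneg d).trans hd)
    rw [hM0, zero_mul] at hDu
    linarith
  have hu : 0 < u := by nlinarith
  have hκ : 0 < κ := by nlinarith
  have hd' : -d / D ≤ κ / (2 * D ^ 2) := by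
    rw [div_le_div_iff₀ hD (by positivity)]
    nlinarith [neg_abs_le d]
  have hsq : κ / (2 * M ^ 2) / u ^ 2 ≤ κ / (2 * D ^ 2) := by
    rw [div_div]
    refine div_le_div_of_nonneg_left hκ.le (by positivity) ?_
    nlinarith [mul_le_mul hDu hDu hD.le (by positivity)]
  calc -κ / D ^ 2 - d / D = -(2 * (κ / (2 * D ^ 2))) + -d / D := by ring
    _ ≤ -(κ / (2 * D ^ 2)) := by linarith
    _ ≤ -(κ / (2 * M ^ 2)) / u ^ 2 := by rw [neg_div]; linarith

lemma tendsto_inv_sub_nhdsLT_atTop (b : ℝ) :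
    Tendsto (fun t => (b - t)⁻¹) (𝓝[<] b) atTop := by
  refine tendsto_inv_nhdsGT_zero.comp (tendsto_nhdsWithin_of_tendsto_nhds_of_eventually_within
    _ ?_ ?_)
  · have : Tendsto (fun t => b - t) (𝓝 b) (𝓝 (b - b)) := tendsto_const_nhds.sub tendsto_id
    simpa using this.mono_left nhdsWithin_le_nhds
  · filter_upwards [self_mem_nhdsWithin] with t ht using sub_pos.2 (mem_Iio.1 ht)

lemma tendsto_atBot_of_hasDerivAt_le_neg_div_sq {φ φ' : ℝ → ℝ} {t₀ b C : ℝ} (ht₀ : t₀ < b)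
    (hC : 0 < C) (hφ : ∀ x ∈ Ico t₀ b, HasDerivAt φ (φ' x) x)
    (hφ' : ∀ x ∈ Ioo t₀ b, φ' x ≤ -C / (b - x) ^ 2) :
    Tendsto φ (𝓝[<] b) atBot := by
  set ψ := fun x => φ x + C * (b - x)⁻¹
  have hψ : ∀ x ∈ Ico t₀ b, HasDerivAt ψ (φ' x + C / (b - x) ^ 2) x := fun x hx => by
    have hbx : b - x ≠ 0 := (sub_pos.2 hx.2).ne'
    refine (hφ x hx).add (((hasDerivAt_id' x).const_sub b).inv hbx |>.const_mul C
      |>.congr_deriv ?_)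
    ring
  have hanti : AntitoneOn ψ (Ico t₀ b) := by
    refine antitoneOn_of_hasDerivWithinAt_nonpos (f' := fun x => φ' x + C / (b - x) ^ 2)
      (convex_Ico t₀ b)
      (fun x hx => (hψ x hx).continuousAt.continuousWithinAt) (fun x hx => ?_) (fun x hx => ?_)
    all_goals rw [interior_Ico] at hx
    · exact (hψ x (Ioo_subset_Ico_self hx)).hasDerivWithinAt
    · linarith [hφ' x hx, neg_div (((b - x) ^ 2)) C]
  have hbound : ∀ t ∈ Ico t₀ b, φ t ≤ ψ t₀ - C * (b - t)⁻¹ := fun t ht => by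
    have := hanti (left_mem_Ico.2 ht₀) ht ht.1
    simp only [ψ] at this
    linarith
  refine tendsto_atBot_mono' _ ?_
    (tendsto_atBot_add_const_left _ (ψ t₀)
      (tendsto_neg_atTop_atBot.comp ((tendsto_inv_sub_nhdsLT_atTop b).const_mul_atTop hC)))
  filter_upwards [Ico_mem_nhdsLT ht₀] with t ht
  simpa [sub_eq_add_neg] using hbound t ht

lemma le_mul_sub_of_norm_derivWithin_le {Δ : ℝ → ℝ} {a b M t : ℝ}
    (hΔ : DifferentiableOn ℝ Δ (Icc a b)) (hM : ∀ x ∈ Icc a b, ‖derivWithin Δ (Icc a b) x‖ ≤ M)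
    (hΔb : Δ b = 0) (ht : t ∈ Icc a b) : Δ t ≤ M * (b - t) := by
  have := (convex_Icc a b).norm_image_sub_le_of_norm_derivWithin_le hΔ hM
    (right_mem_Icc.2 (ht.1.trans ht.2)) ht
  rw [hΔb, sub_zero, Real.norm_eq_abs, Real.norm_eq_abs, abs_sub_comm,
    abs_of_nonneg (sub_nonneg.2 ht.2)] at this
  exact (le_abs_self _).trans this

theorem tendsto_exp_div_nhdsLT_of_hasDerivAt {a b κ : ℝ} {Δ z : ℝ → ℝ} (hab : a < b)
    (hΔ : ContDiffOn ℝ 1 Δ (Icc a b)) (hΔb : Δ b = 0) (hΔpos : ∀ x ∈ Ioo a b, 0 < Δ x)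
    (hκ : 0 < κ) (hz : ∀ x ∈ Ioo a b, HasDerivAt z (-κ / Δ x ^ 2) x) :
    Tendsto (fun t => exp (z t) / Δ t) (𝓝[<] b) (𝓝 0) := by
  set Δ' := derivWithin Δ (Icc a b)
  obtain ⟨K, hK⟩ := isCompact_Icc.exists_bound_of_continuousOn
    (hΔ.continuousOn_derivWithin (uniqueDiffOn_Icc hab) le_rfl)
  set M := max K 1
  have hM : 0 < M := lt_max_of_lt_right one_pos
  have hΔ'M : ∀ x ∈ Icc a b, ‖Δ' x‖ ≤ M := fun x hx => (hK x hx).trans (le_max_left _ _)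
  have hΔdiff := hΔ.differentiableOn one_ne_zero
  have hΔ' : ∀ x ∈ Ioo a b, HasDerivAt Δ (Δ' x) x := fun x hx =>
    (hΔdiff x (Ioo_subset_Icc_self hx)).hasDerivWithinAt.hasDerivAt (Icc_mem_nhds hx.1 hx.2)
  have hΔlim : Tendsto Δ (𝓝[<] b) (𝓝 0) := by
    rw [← hΔb]
    exact (hΔ.continuousOn b (right_mem_Icc.2 hab.le)).tendsto.mono_left
      (nhdsWithin_le_of_mem (mem_of_superset (Ioo_mem_nhdsLT hab) Ioo_subset_Icc_self))
  have hsmall : ∀ᶠ t in 𝓝[<] b, t ∈ Ioo a b ∧ 2 * M * Δ t ≤ κ := by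
    filter_upwards [Ioo_mem_nhdsLT hab,
      hΔlim.eventually (eventually_le_nhds (show 0 < κ / (2 * M) by positivity))] with t ht hΔt
    exact ⟨ht, by rwa [le_div_iff₀' (by positivity)] at hΔt⟩
  obtain ⟨t₀, ht₀, ht₀sub⟩ := mem_nhdsLT_iff_exists_Ico_subset.1 hsmall
  have hφ : Tendsto (fun t => z t - log (Δ t)) (𝓝[<] b) atBot := by
    refine tendsto_atBot_of_hasDerivAt_le_neg_div_sq ht₀ (C := κ / (2 * M ^ 2)) (by positivity)
      (fun x hx => (hz x (ht₀sub hx).1).sub ((hΔ' x (ht₀sub hx).1).log (hΔpos x (ht₀sub hx).1).ne'))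
      (fun x hx => ?_)
    obtain ⟨hxI, hxsmall⟩ := ht₀sub (Ioo_subset_Ico_self hx)
    exact neg_div_sq_sub_div_le (hΔpos x hxI) (hΔ'M x (Ioo_subset_Icc_self hxI)) hxsmall
      (le_mul_sub_of_norm_derivWithin_le hΔdiff hΔ'M hΔb (Ioo_subset_Icc_self hxI))
  refine (tendsto_exp_atBot.comp hφ).congr' ?_
  filter_upwards [Ioo_mem_nhdsLT hab] with t ht
  simp only [Function.comp, exp_sub, exp_log (hΔpos t ht)]

lemma intervalIntegrable_of_continuousOn_Icc_of_eqOn_Ico {E : Type*} [NormedAddCommGroup E]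
    {f g : ℝ → E} {c b : ℝ} (hcb : c ≤ b) (hg : ContinuousOn g (Icc c b))
    (hfg : EqOn f g (Ico c b)) : IntervalIntegrable f MeasureTheory.volume c b := by
  rw [intervalIntegrable_iff_integrableOn_Ico_of_le hcb]
  exact (hg.integrableOn_Icc.mono_set Ico_subset_Icc_self).congr_fun hfg.symm measurableSet_Ico

theorem stmt_1_general (a b c σ : ℝ) (Δ : ℝ → ℝ)
    (hΔ : ContDiffOn ℝ 1 Δ (Icc a b))
    (hΔb : Δ b = 0)
    (hΔpos : ∀ θ ∈ Ioo a b, 0 < Δ θ)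
    (hc : c ∈ Ioo a b) (hσ : 0 < σ)
    (z : ℝ → ℝ)
    (hz : ∀ x, z x = -(2 / σ ^ 2) * ∫ s in c..x, ((Δ s) ^ 2)⁻¹) :
    Tendsto (fun t => Real.exp (z t) / Δ t) (𝓝[<] b) (𝓝 0) ∧
    (∃ g : ℝ → ℝ, ContinuousOn g (Icc c b) ∧
      ∀ t ∈ Ico c b, g t = Real.exp (z t) / Δ t) ∧
    IntervalIntegrable (fun t => Real.exp (z t) / Δ t) MeasureTheory.volume c b := by
  obtain ⟨hac, hcb⟩ := hc
  have hinv : ContinuousOn (fun s => (Δ s ^ 2)⁻¹) (Ioo a b) :=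
    ((hΔ.continuousOn.mono Ioo_subset_Icc_self).pow 2).inv₀
      fun s hs => pow_ne_zero 2 (hΔpos s hs).ne'
  have hz' : ∀ x ∈ Ioo a b, HasDerivAt z (-(2 / σ ^ 2) / Δ x ^ 2) x := fun x hx => by
    rw [funext hz]
    exact ((hasDerivAt_integral_of_continuousOn_Ioo hinv ⟨hac, hcb⟩ hx).const_mul _).congr_deriv
      (by ring)
  have hlim := tendsto_exp_div_nhdsLT_of_hasDerivAt (hac.trans hcb) hΔ hΔb hΔpos (by positivity) hz'
  set f := fun t => exp (z t) / Δ t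
  have hcont : ContinuousOn f (Ico c b) := fun x hx => by
    have hx' : x ∈ Ioo a b := ⟨hac.trans_le hx.1, hx.2⟩
    have hΔx : ContinuousAt Δ x := hΔ.continuousOn.continuousAt (Icc_mem_nhds hx'.1 hx'.2)
    exact ((hz' x hx').continuousAt.rexp.div hΔx (hΔpos x hx').ne').continuousWithinAt
  have hext : ContinuousOn (Function.update f b 0) (Icc c b) := by
    rw [continuousOn_update_iff, Icc_sdiff_right]
    exact ⟨hcont, fun _ => hlim.mono_left (nhdsWithin_mono _ Ico_subset_Iio_self)⟩
  have hagree : EqOn (Function.update f b 0) f (Ico c b) := fun t ht =>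
    Function.update_of_ne ht.2.ne _ _
  exact ⟨hlim, ⟨_, hext, hagree⟩,
    intervalIntegrable_of_continuousOn_Icc_of_eqOn_Ico hcb.le hext hagree.symm⟩

/-- Under the stated hypotheses, `t ↦ exp (z t) / Δ t` tends to `0`
as `t → b⁻`; consequently it extends continuously to `[c,b]` and the integral
`L = ∫_c^b e^{z(t)}/Δ(t) dt` is finite (i.e. the function is interval integrable). -/
theorem stmt_1 (a b c σ : ℝ) (Δ : ℝ → ℝ)
    (hab : a < b)
    (hΔ : ContDiffOn ℝ 1 Δ (Icc a b))
    (hΔa : Δ a = 0) (hΔb : Δ b = 0)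
    (hΔpos : ∀ θ ∈ Ioo a b, 0 < Δ θ)
    (hc : c ∈ Ioo a b) (hσ : 0 < σ)
    (z : ℝ → ℝ)
    (hz : ∀ x, z x = -(2 / σ ^ 2) * ∫ s in c..x, ((Δ s) ^ 2)⁻¹) :
    Tendsto (fun t => Real.exp (z t) / Δ t) (𝓝[<] b) (𝓝 0) ∧
    (∃ g : ℝ → ℝ, ContinuousOn g (Icc c b) ∧
      ∀ t ∈ Ico c b, g t = Real.exp (z t) / Δ t) ∧
    IntervalIntegrable (fun t => Real.exp (z t) / Δ t) MeasureTheory.volume c b :=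
  stmt_1_general a b c σ Δ hΔ hΔb hΔpos hc hσ z hz
end

section
/- Under the stated hypotheses, the product Δ(x) e^{z(x)} tends to +∞ as x → a⁺. -/
/-!
With `f = log Δ + z` we have `f' = Δ'/Δ - 2/(σ²Δ²)`. As `Δ` is Lipschitz with constant `M` and
vanishes at `a`, `Δ' ≤ M` and `Δ(x) ≤ M (x - a)`. Close to `a` we have `Mσ²Δ ≤ 1`, so
`Δ'/Δ ≤ 1/(σ²Δ²)` and `f' ≤ -1/(σ²Δ²) ≤ -k/(x - a)²` with `k = 1/(σ²M²)`. Hence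
`f - k/(x - a)` is antitone near `a`, so `f(x) ≥ k/(x - a) - C → ∞`, and `Δ e^z = e^f → ∞`.
-/

open Real Filter Set Topology intervalIntegral

theorem tendsto_inv_sub_nhdsGT (a : ℝ) : Tendsto (fun x => (x - a)⁻¹) (𝓝[>] a) atTop := by
  refine Tendsto.inv_tendsto_nhdsGT_zero (tendsto_nhdsWithin_iff.2 ⟨?_, ?_⟩)
  · simpa using (continuous_sub_right a).continuousWithinAt (s := Ioi a) (x := a) |>.tendsto
  · filter_upwards [self_mem_nhdsWithin] with x (hx : a < x) using sub_pos.2 hx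

theorem tendsto_atTop_of_hasDerivAt_le_neg_div_sq {f f' : ℝ → ℝ} {a k : ℝ} (hk : 0 < k)
    (hf : ∀ᶠ x in 𝓝[>] a, HasDerivAt f (f' x) x ∧ f' x ≤ -k / (x - a) ^ 2) :
    Tendsto f (𝓝[>] a) atTop := by
  obtain ⟨b, hab, hb⟩ := (nhdsGT_basis a).eventually_iff.mp hf
  set G : ℝ → ℝ := fun x => f x - k * (x - a)⁻¹
  have hG : ∀ x ∈ Ioo a b, HasDerivAt G (f' x + k / (x - a) ^ 2) x := fun x hx => by
    have hinv := ((hasDerivAt_id' x).sub_const a).fun_inv (sub_ne_zero.2 hx.1.ne')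
    exact ((hb hx).1.fun_sub (hinv.const_mul k)).congr_deriv (by ring)
  have hanti : AntitoneOn G (Ioo a b) := by
    refine antitoneOn_of_hasDerivWithinAt_nonpos (f' := fun x => f' x + k / (x - a) ^ 2)
      (convex_Ioo a b)
      (fun x hx => (hG x hx).continuousAt.continuousWithinAt) ?_ ?_ <;> rw [interior_Ioo]
    · exact fun x hx => (hG x hx).hasDerivWithinAt
    · exact fun x hx => by linarith [(hb hx).2, neg_div ((x - a) ^ 2) k]
  obtain ⟨x₁, hax₁, hx₁b⟩ := exists_between hab
  have hlower : ∀ᶠ x in 𝓝[>] a, G x₁ + k * (x - a)⁻¹ ≤ f x := by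
    filter_upwards [Ioo_mem_nhdsGT hax₁] with x hx
    have := hanti ⟨hx.1, hx.2.trans hx₁b⟩ ⟨hax₁, hx₁b⟩ hx.2.le
    simp only [G] at this
    linarith
  exact tendsto_atTop_mono' _ hlower
    (tendsto_atTop_add_const_left _ _ ((tendsto_inv_sub_nhdsGT a).const_mul_atTop hk))

theorem hasDerivAt_integral_of_continuousOn {E : Type*} [NormedAddCommGroup E] [NormedSpace ℝ E]
    [CompleteSpace E] {f : ℝ → E} {s : Set ℝ} {c x : ℝ} (hs : IsOpen s) (hs' : s.OrdConnected)
    (hf : ContinuousOn f s) (hc : c ∈ s) (hx : x ∈ s) :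
    HasDerivAt (fun y => ∫ t in c..y, f t) (f x) x :=
  integral_hasDerivAt_right ((hf.mono (hs'.uIcc_subset hc hx)).intervalIntegrable)
    (hf.stronglyMeasurableAtFilter hs x hx) (hf.continuousAt (hs.mem_nhds hx))

theorem ContDiffOn.exists_pos_deriv_le_and_le_mul_sub {f : ℝ → ℝ} {a b : ℝ}
    (hf : ContDiffOn ℝ 1 f (Icc a b)) (hfa : f a = 0) :
    ∃ M > 0, ∀ x ∈ Ioo a b,
      HasDerivAt f (deriv f x) x ∧ deriv f x ≤ M ∧ f x ≤ M * (x - a) := by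
  obtain ⟨K, hK⟩ := hf.exists_lipschitzOnWith one_ne_zero (convex_Icc a b) isCompact_Icc
  have hLip : LipschitzOnWith (K + 1) f (Icc a b) := hK.weaken (le_add_of_nonneg_right zero_le_one)
  refine ⟨K + 1, by positivity, fun x hx => ⟨?_, ?_, ?_⟩⟩
  · exact ((hf.differentiableOn one_ne_zero x (Ioo_subset_Icc_self hx)).differentiableAt
      (Icc_mem_nhds hx.1 hx.2)).hasDerivAt
  · exact (le_abs_self _).trans (norm_deriv_le_of_lipschitzOn (Icc_mem_nhds hx.1 hx.2) hLip)
  · have := hLip.dist_le_mul x (Ioo_subset_Icc_self hx) a ⟨le_rfl, hx.1.le.trans hx.2.le⟩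
    rw [Real.dist_eq, Real.dist_eq, hfa, sub_zero, abs_of_pos (sub_pos.2 hx.1)] at this
    exact (le_abs_self _).trans this

theorem div_sub_two_div_le_neg_div_sq {D D' M t σ : ℝ} (hD : 0 < D) (hDt : D ≤ M * t)
    (hD' : D' ≤ M) (hsmall : M * σ ^ 2 * D ≤ 1) (hσ : σ ≠ 0) :
    D' / D - 2 / (σ ^ 2 * D ^ 2) ≤ -(1 / (σ ^ 2 * M ^ 2)) / t ^ 2 := by
  have hσD : 0 < σ ^ 2 * D ^ 2 := by positivity
  have hdrift : D' / D ≤ 1 / (σ ^ 2 * D ^ 2) := by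
    rw [div_le_div_iff₀ hD hσD]
    nlinarith [mul_le_mul_of_nonneg_right hD' hσD.le, mul_le_mul_of_nonneg_right hsmall hD.le]
  have hrepulsion : 1 / (σ ^ 2 * M ^ 2) / t ^ 2 ≤ 1 / (σ ^ 2 * D ^ 2) := by
    rw [div_div, mul_assoc, ← mul_pow]
    exact one_div_le_one_div_of_le hσD (by gcongr)
  have htwo : 2 / (σ ^ 2 * D ^ 2) = 2 * (1 / (σ ^ 2 * D ^ 2)) := by ring
  rw [neg_div]
  linarith

theorem stmt_4_general (a b c σ : ℝ) (Δ : ℝ → ℝ)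
    (hab : a < b)
    (hΔ : ContDiffOn ℝ 1 Δ (Icc a b))
    (hΔa : Δ a = 0)
    (hΔpos : ∀ θ ∈ Ioo a b, 0 < Δ θ)
    (hc : c ∈ Ioo a b) (hσ : 0 < σ)
    (z : ℝ → ℝ)
    (hz : ∀ x, z x = -(2 / σ ^ 2) * ∫ s in c..x, ((Δ s) ^ 2)⁻¹) :
    Tendsto (fun x => Δ x * Real.exp (z x)) (𝓝[>] a) atTop := by
  obtain ⟨M, hM, hΔ_bounds⟩ := hΔ.exists_pos_deriv_le_and_le_mul_sub hΔa
  have hz_deriv : ∀ x ∈ Ioo a b, HasDerivAt z (-(2 / σ ^ 2) * (Δ x ^ 2)⁻¹) x := by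
    have hcont : ContinuousOn (fun s => (Δ s ^ 2)⁻¹) (Ioo a b) :=
      ((hΔ.continuousOn.mono Ioo_subset_Icc_self).pow 2).inv₀
        fun s hs => pow_ne_zero 2 (hΔpos s hs).ne'
    obtain rfl : z = _ := funext hz
    exact fun x hx =>
      (hasDerivAt_integral_of_continuousOn isOpen_Ioo ordConnected_Ioo hcont hc hx).const_mul _
  have hΔ_small : ∀ᶠ x in 𝓝[>] a, M * σ ^ 2 * Δ x ≤ 1 := by
    have hΔ_lim : Tendsto Δ (𝓝[>] a) (𝓝 0) := hΔa ▸
      ((hΔ.continuousOn a (left_mem_Icc.2 hab.le)).mono_of_mem_nhdsWithin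
        (Icc_mem_nhdsGT hab)).tendsto
    exact (hΔ_lim.const_mul (M * σ ^ 2)).eventually
      (ge_mem_nhds (by rw [mul_zero]; exact zero_lt_one))
  have hIoo : Ioo a b ∈ 𝓝[>] a := Ioo_mem_nhdsGT hab
  have hlog : Tendsto (fun x => log (Δ x) + z x) (𝓝[>] a) atTop := by
    refine tendsto_atTop_of_hasDerivAt_le_neg_div_sq
      (f' := fun x => deriv Δ x / Δ x - 2 / (σ ^ 2 * Δ x ^ 2)) (k := 1 / (σ ^ 2 * M ^ 2))
      (by positivity) ?_
    filter_upwards [hIoo, hΔ_small] with x hx hsmall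
    exact ⟨(((hΔ_bounds x hx).1.log (hΔpos x hx).ne').add (hz_deriv x hx)).congr_deriv (by ring),
      div_sub_two_div_le_neg_div_sq (hΔpos x hx) (hΔ_bounds x hx).2.2 (hΔ_bounds x hx).2.1
        hsmall hσ.ne'⟩
  refine (tendsto_exp_atTop.comp hlog).congr' ?_
  filter_upwards [hIoo] with x hx
  simp only [Function.comp_apply, exp_add, exp_log (hΔpos x hx)]

/-- Under the stated hypotheses, the product `Δ(x) e^{z(x)}` tends to
`+∞` as `x → a⁺`. -/
theorem stmt_4 (a b c σ : ℝ) (Δ : ℝ → ℝ)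
    (hab : a < b)
    (hΔ : ContDiffOn ℝ 1 Δ (Icc a b))
    (hΔa : Δ a = 0) (hΔb : Δ b = 0)
    (hΔpos : ∀ θ ∈ Ioo a b, 0 < Δ θ)
    (hc : c ∈ Ioo a b) (hσ : 0 < σ)
    (z : ℝ → ℝ)
    (hz : ∀ x, z x = -(2 / σ ^ 2) * ∫ s in c..x, ((Δ s) ^ 2)⁻¹) :
    Tendsto (fun x => Δ x * Real.exp (z x)) (𝓝[>] a) atTop :=
  stmt_4_general a b c σ Δ hab hΔ hΔa hΔpos hc hσ z hz
end

section
/- Under the stated hypotheses, the integral ∫_x^b e^{z(t)}/Δ(t) dt tends to +∞ as x → a⁺. -/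
/-!
Since `z` is antitone and vanishes at `c`, the integrand `e^z / Δ` is at least `1 / Δ` on `(a, c]`,
and `Δ t ≤ K (t - a)` because `Δ` is Lipschitz and vanishes at `a`; so `∫_x^c` grows at least like
`K⁻¹ log (1 / (x - a))`. The integral over `[c, b]` is finite: writing `z' = -k / Δ²`, the
derivative of `e^z / Δ` has the sign of `-k - Δ Δ'`, which is negative near `b` because `Δ → 0`
there while `Δ'` stays bounded. Hence the integrand is decreasing, and so bounded, near `b`.
-/

open Real Filter Set Topology intervalIntegral MeasureTheory

theorem hasDerivAt_integral_of_continuousOn_Ioo_s5 {E : Type*} [NormedAddCommGroup E]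
    [NormedSpace ℝ E] [CompleteSpace E] {g : ℝ → E} {a b c t : ℝ}
    (hg : ContinuousOn g (Ioo a b)) (hc : c ∈ Ioo a b) (ht : t ∈ Ioo a b) :
    HasDerivAt (fun x => ∫ s in c..x, g s) (g t) t :=
  integral_hasDerivAt_right
    (hg.mono (ordConnected_Ioo.uIcc_subset hc ht)).intervalIntegrable
    (hg.stronglyMeasurableAtFilter isOpen_Ioo t ht)
    (hg.continuousAt (isOpen_Ioo.mem_nhds ht))

theorem ContDiffOn.exists_pos_lipschitzOnWith_Icc {a b : ℝ} {f : ℝ → ℝ}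
    (hf : ContDiffOn ℝ 1 f (Icc a b)) : ∃ K : NNReal, 0 < K ∧ LipschitzOnWith K f (Icc a b) := by
  obtain ⟨K, hK⟩ := hf.exists_lipschitzOnWith one_ne_zero (convex_Icc a b) isCompact_Icc
  exact ⟨K + 1, by positivity, hK.weaken le_self_add⟩

theorem antitoneOn_exp_div {s : Set ℝ} (hs : Convex ℝ s) {z z' Δ Δ' : ℝ → ℝ}
    (hz : ∀ t ∈ s, HasDerivAt z (z' t) t) (hΔ : ∀ t ∈ s, HasDerivAt Δ (Δ' t) t)
    (hpos : ∀ t ∈ s, 0 < Δ t) (hle : ∀ t ∈ s, z' t * Δ t ≤ Δ' t) :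
    AntitoneOn (fun t => exp (z t) / Δ t) s := by
  have hderiv : ∀ t ∈ s, HasDerivAt (fun t => exp (z t) / Δ t)
      ((exp (z t) * z' t * Δ t - exp (z t) * Δ' t) / Δ t ^ 2) t :=
    fun t ht => (hz t ht).exp.div (hΔ t ht) (hpos t ht).ne'
  refine antitoneOn_of_hasDerivWithinAt_nonpos hs
    (fun t ht => (hderiv t ht).continuousAt.continuousWithinAt)
    (fun t ht => (hderiv t (interior_subset ht)).hasDerivWithinAt) fun t ht => ?_
  rw [mul_assoc, ← mul_sub]
  exact div_nonpos_of_nonpos_of_nonneg (mul_nonpos_of_nonneg_of_nonpos (exp_pos _).le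
    (sub_nonpos.2 (hle t (interior_subset ht)))) (sq_nonneg _)

theorem exists_antitoneOn_exp_div_Icc {a b k C : ℝ} {z Δ Δ' : ℝ → ℝ} (hab : a < b) (hk : 0 < k)
    (hΔb : ContinuousWithinAt Δ (Iio b) b) (hΔb₀ : Δ b = 0)
    (hΔpos : ∀ t ∈ Ioo a b, 0 < Δ t) (hΔ : ∀ t ∈ Ioo a b, HasDerivAt Δ (Δ' t) t)
    (hΔ'C : ∀ t ∈ Ioo a b, -C ≤ Δ' t)
    (hz : ∀ t ∈ Ioo a b, HasDerivAt z (-k * (Δ t ^ 2)⁻¹) t) :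
    ∃ c ∈ Ioo a b, AntitoneOn (fun t => exp (z t) / Δ t) (Icc c b) := by
  have hsmall : ∀ᶠ t in 𝓝[<] b, Δ t * C < k := by
    have : Tendsto (fun t => Δ t * C) (𝓝[<] b) (𝓝 0) := by
      simpa [hΔb₀] using hΔb.tendsto.mul_const C
    exact this.eventually (gt_mem_nhds hk)
  obtain ⟨l, hlb, hl⟩ :=
    (mem_nhdsLT_iff_exists_Ioo_subset' hab).1 (hsmall.and (Ioo_mem_nhdsLT hab))
  have hsub : Ico ((l + b) / 2) b ⊆ Ioo l b :=
    fun t ht => ⟨by linarith [ht.1, mem_Iio.1 hlb], ht.2⟩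
  have hc : (l + b) / 2 ∈ Ioo a b := (hl (hsub ⟨le_rfl, by linarith [mem_Iio.1 hlb]⟩)).2
  have hIco : AntitoneOn (fun t => exp (z t) / Δ t) (Ico ((l + b) / 2) b) := by
    refine antitoneOn_exp_div (convex_Ico _ b) (fun t ht => hz t (hl (hsub ht)).2)
      (fun t ht => hΔ t (hl (hsub ht)).2) (fun t ht => hΔpos t (hl (hsub ht)).2) fun t ht => ?_
    obtain ⟨hΔC, htab⟩ := hl (hsub ht)
    have hΔt := hΔpos t htab
    have : -k ≤ Δ t * Δ' t := by nlinarith [hΔ'C t htab]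
    calc -k * (Δ t ^ 2)⁻¹ * Δ t = -k / Δ t := by field_simp
      _ ≤ Δ' t := by rw [div_le_iff₀ hΔt]; linarith
  refine ⟨(l + b) / 2, hc, fun s hs t ht hst => ?_⟩
  rcases ht.2.lt_or_eq with htb | rfl
  · exact hIco ⟨hs.1, hst.trans_lt htb⟩ ⟨ht.1, htb⟩ hst
  rcases hs.2.lt_or_eq with hsb | rfl
  · -- dividing by `Δ b = 0` gives the integrand the value `0` at `b`
    simp only [hΔb₀, div_zero]
    exact (div_pos (exp_pos _) (hΔpos s ⟨hc.1.trans_le hs.1, hsb⟩)).le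
  · exact le_rfl

theorem intervalIntegrable_of_continuousOn_of_antitoneOn {f : ℝ → ℝ} {a b c x : ℝ}
    (hf : ContinuousOn f (Ioo a b)) (hc : c ∈ Ioo a b) (hanti : AntitoneOn f (Icc c b))
    (hx : x ∈ Ioo a b) : IntervalIntegrable f volume x b :=
  (hf.mono (ordConnected_Ioo.uIcc_subset hx hc)).intervalIntegrable.trans
    (AntitoneOn.intervalIntegrable (by rwa [uIcc_of_le hc.2.le]))

theorem tendsto_integral_nhdsGT_atTop {f : ℝ → ℝ} {a b c C : ℝ} (hac : a < c) (hcb : c ≤ b)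
    (hC : 0 < C) (hf : ∀ x ∈ Ioo a c, IntervalIntegrable f volume x b)
    (hle : ∀ t ∈ Ioc a c, C * (t - a)⁻¹ ≤ f t) :
    Tendsto (fun x => ∫ t in x..b, f t) (𝓝[>] a) atTop := by
  have hshift : Tendsto (fun x => x - a) (𝓝[>] a) (𝓝[>] 0) := by
    simpa using (continuous_sub_right a).continuousWithinAt.tendsto_nhdsWithin (x := a)
      (s := Ioi a) (t := Ioi 0) fun x (hx : a < x) => sub_pos.2 hx
  have hlog : Tendsto (fun x => C * log ((c - a) / (x - a)) + ∫ t in c..b, f t)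
      (𝓝[>] a) atTop := by
    have : Tendsto (fun x => (c - a) / (x - a)) (𝓝[>] a) atTop := by
      simpa only [div_eq_mul_inv, Function.comp_def] using
        (tendsto_inv_nhdsGT_zero.comp hshift).const_mul_atTop (sub_pos.2 hac)
    exact tendsto_atTop_add_const_right _ _ ((tendsto_log_atTop.comp this).const_mul_atTop hC)
  refine tendsto_atTop_mono' _ ?_ hlog
  filter_upwards [Ioo_mem_nhdsGT hac] with x hx
  have hxa : 0 < x - a := sub_pos.2 hx.1
  have hcx : c ∈ uIcc x b := mem_uIcc_of_le hx.2.le hcb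
  have hfxc : IntervalIntegrable f volume x c :=
    (hf x hx).mono_set (uIcc_subset_uIcc_left hcx)
  have hinv : IntervalIntegrable (fun t => C * (t - a)⁻¹) volume x c := by
    refine (continuousOn_const.mul
      ((continuousOn_id.sub continuousOn_const).inv₀ fun t ht => ?_)).intervalIntegrable
    rw [uIcc_of_le hx.2.le] at ht
    exact (sub_pos.2 (hx.1.trans_le ht.1)).ne'
  calc C * log ((c - a) / (x - a)) + ∫ t in c..b, f t
      = (∫ t in x..c, C * (t - a)⁻¹) + ∫ t in c..b, f t := by
        rw [intervalIntegral.integral_const_mul, integral_comp_sub_right (fun t => t⁻¹),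
          integral_inv_of_pos hxa (by linarith [hx.2])]
    _ ≤ (∫ t in x..c, f t) + ∫ t in c..b, f t := by
        gcongr
        exact integral_mono_on hx.2.le hinv hfxc fun t ht => hle t ⟨hx.1.trans_le ht.1, ht.2⟩
    _ = ∫ t in x..b, f t :=
        integral_add_adjacent_intervals hfxc
          ((hf x hx).mono_set (uIcc_subset_uIcc_right hcx))

section

variable {a b c k : ℝ} {Δ z : ℝ → ℝ}

theorem hasDerivAt_of_eq_neg_mul_integral_inv_sq (hΔ : ContinuousOn Δ (Ioo a b))
    (hΔpos : ∀ t ∈ Ioo a b, 0 < Δ t) (hc : c ∈ Ioo a b)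
    (hz : ∀ x, z x = -k * ∫ s in c..x, (Δ s ^ 2)⁻¹) {t : ℝ} (ht : t ∈ Ioo a b) :
    HasDerivAt z (-k * (Δ t ^ 2)⁻¹) t := by
  rw [show z = _ from funext hz]
  exact (hasDerivAt_integral_of_continuousOn_Ioo_s5
    ((hΔ.pow 2).inv₀ fun s hs => (pow_pos (hΔpos s hs) 2).ne') hc ht).const_mul _

theorem nonneg_of_eq_neg_mul_integral_inv_sq (hk : 0 ≤ k)
    (hz : ∀ x, z x = -k * ∫ s in c..x, (Δ s ^ 2)⁻¹) {t : ℝ} (ht : t ≤ c) : 0 ≤ z t := by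
  rw [hz, integral_symm, mul_neg, ← neg_mul, neg_neg]
  exact mul_nonneg hk (integral_nonneg ht fun s _ => by positivity)

end

/-- Under the stated hypotheses, the integral `∫_x^b e^{z(t)}/Δ(t) dt`
tends to `+∞` as `x → a⁺`. -/
theorem stmt_5 (a b c σ : ℝ) (Δ : ℝ → ℝ)
    (hab : a < b)
    (hΔ : ContDiffOn ℝ 1 Δ (Icc a b))
    (hΔa : Δ a = 0) (hΔb : Δ b = 0)
    (hΔpos : ∀ θ ∈ Ioo a b, 0 < Δ θ)
    (hc : c ∈ Ioo a b) (hσ : 0 < σ)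
    (z : ℝ → ℝ)
    (hz : ∀ x, z x = -(2 / σ ^ 2) * ∫ s in c..x, ((Δ s) ^ 2)⁻¹) :
    Tendsto (fun x => ∫ t in x..b, Real.exp (z t) / Δ t) (𝓝[>] a) atTop := by
  have hIcc : ∀ t ∈ Ioo a b, Icc a b ∈ 𝓝 t := fun t ht => Icc_mem_nhds ht.1 ht.2
  have hΔcont : ContinuousOn Δ (Ioo a b) := hΔ.continuousOn.mono Ioo_subset_Icc_self
  obtain ⟨K, hK0, hK⟩ := hΔ.exists_pos_lipschitzOnWith_Icc
  have hΔ' : ∀ t ∈ Ioo a b, HasDerivAt Δ (deriv Δ t) t := fun t ht =>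
    ((hΔ.differentiableOn one_ne_zero t (Ioo_subset_Icc_self ht)).differentiableAt
      (hIcc t ht)).hasDerivAt
  have hz' := fun t (ht : t ∈ Ioo a b) =>
    hasDerivAt_of_eq_neg_mul_integral_inv_sq hΔcont hΔpos hc hz ht
  have hfcont : ContinuousOn (fun t => exp (z t) / Δ t) (Ioo a b) :=
    (continuous_exp.comp_continuousOn fun t ht => (hz' t ht).continuousAt.continuousWithinAt).div
      hΔcont fun t ht => (hΔpos t ht).ne'
  obtain ⟨c', hc', hanti⟩ := exists_antitoneOn_exp_div_Icc hab (by positivity)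
    ((hΔ.continuousOn b ⟨hab.le, le_rfl⟩).mono_of_mem_nhdsWithin (Icc_mem_nhdsLT hab)) hΔb
    hΔpos hΔ' (fun t ht => (abs_le.1 (norm_deriv_le_of_lipschitzOn (hIcc t ht) hK)).1) hz'
  have hlow : ∀ t ∈ Ioc a c, (K : ℝ)⁻¹ * (t - a)⁻¹ ≤ exp (z t) / Δ t := fun t ht => by
    have hΔt : 0 < Δ t := hΔpos t ⟨ht.1, ht.2.trans_lt hc.2⟩
    have hΔK : Δ t ≤ K * (t - a) := (le_abs_self _).trans <| by
      simpa [hΔa, Real.dist_eq, abs_of_pos (sub_pos.2 ht.1)] using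
        hK.dist_le_mul t ⟨ht.1.le, ht.2.trans hc.2.le⟩ a ⟨le_rfl, hab.le⟩
    calc (K : ℝ)⁻¹ * (t - a)⁻¹ = 1 / (K * (t - a)) := by rw [one_div, mul_inv]
      _ ≤ 1 / Δ t := one_div_le_one_div_of_le hΔt hΔK
      _ ≤ exp (z t) / Δ t := div_le_div_of_nonneg_right
          (one_le_exp (nonneg_of_eq_neg_mul_integral_inv_sq (by positivity) hz ht.2)) hΔt.le
  exact tendsto_integral_nhdsGT_atTop hc.1 hc.2.le (by positivity) (fun x hx =>
    intervalIntegrable_of_continuousOn_of_antitoneOn hfcont hc' hanti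
      ⟨hx.1, hx.2.trans hc.2⟩) hlow
end

section
/- Let a < b be real numbers, Δ : [a,b] → ℝ continuously differentiable with Δ(a) = Δ(b) = 0 and Δ(θ) > 0 for θ ∈ (a,b), and let σ > 0 and J ∈ ℝ. Then there exists a continuous function P : [a,b] → ℝ, continuously differentiable on (a,b), such that P(a) = P(b) = J and the singular steady-state equation −J = −P(θ) + (σ²/2) Δ(θ) (Δ·P)'(θ) holds for all θ ∈ (a,b). -/
/-!
Write `c = σ² / 2` and `Q = Δ P`. Multiplied by `Δ`, the equation becomes the linear first-order
equation `c Δ² Q' = Q - J Δ` on `(a, b)`. With the potential `E' = 1 / (c Δ²)` as integrating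
factor, `Q = J (Δ + e^{E(θ)} ∫_θ^b e^{-E} Δ')` is a solution, i.e. `P = J (1 + r)` with
`r(θ) = Δ(θ)⁻¹ ∫_θ^b e^{E(θ) - E(s)} Δ'(s) ds`.

Both boundary values come from one uniform estimate on `r`. If `|Δ'| ≤ M`, then
`Δ ≤ (1 + M) Δ(θ)` on `[θ, θ + Δ(θ)]`, so `E` grows there at rate at least
`1 / (c (1 + M)² Δ(θ)²)`: the kernel `e^{E(θ) - E(s)}` decays on the scale `Δ(θ)²`.
This gives `|r(θ)| ≤ M (c (1 + M)² Δ(θ) + (b - a) e^{-1 / (c (1 + M)² Δ(θ))} / Δ(θ))`,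
which tends to `0` as `Δ(θ) → 0`, i.e. as `θ` tends to either endpoint.
-/

open Real Filter Set Topology intervalIntegral MeasureTheory

theorem continuousWithinAt_Icc_iff_Ioo {α β : Type*} [LinearOrder α] [TopologicalSpace α]
    [T1Space α] [TopologicalSpace β] {f : α → β} {a b x : α} :
    ContinuousWithinAt f (Icc a b) x ↔ ContinuousWithinAt f (Ioo a b) x := by
  refine ⟨fun h => h.mono Ioo_subset_Icc_self, fun h => ?_⟩
  have hsub : Icc a b ⊆ insert a (insert b (Ioo a b)) := fun y hy => by
    rcases hy.1.eq_or_lt with rfl | hay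
    · exact .inl rfl
    rcases hy.2.eq_or_lt with rfl | hyb
    · exact .inr (.inl rfl)
    · exact .inr (.inr ⟨hay, hyb⟩)
  exact (continuousWithinAt_insert.2 (continuousWithinAt_insert.2 h)).mono hsub

theorem ContinuousOn.hasDerivAt_integral_Ioo {E : Type*} [NormedAddCommGroup E]
    [NormedSpace ℝ E] [CompleteSpace E] {f : ℝ → E} {a b x₀ θ : ℝ}
    (hf : ContinuousOn f (Ioo a b)) (hx₀ : x₀ ∈ Ioo a b) (hθ : θ ∈ Ioo a b) :
    HasDerivAt (fun t => ∫ u in x₀..t, f u) (f θ) θ :=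
  integral_hasDerivAt_right (hf.mono (ordConnected_Ioo.uIcc_subset hx₀ hθ)).intervalIntegrable
    (hf.stronglyMeasurableAtFilter isOpen_Ioo θ hθ) (hf.continuousAt (isOpen_Ioo.mem_nhds hθ))

theorem contDiffOn_one_of_hasDerivAt {f f' : ℝ → ℝ} {s : Set ℝ} (hs : IsOpen s)
    (hf : ∀ x ∈ s, HasDerivAt f (f' x) x) (hf' : ContinuousOn f' s) : ContDiffOn ℝ 1 f s :=
  (contDiffOn_succ_iff_deriv_of_isOpen (n := 0) hs).2
    ⟨fun x hx => (hf x hx).differentiableAt.differentiableWithinAt, by simp,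
      contDiffOn_zero.2 (hf'.congr fun x hx => (hf x hx).deriv)⟩

theorem integral_exp_neg_sub_div_le {θ b B : ℝ} (hB : 0 < B) :
    ∫ s in θ..b, exp (-((s - θ) / B)) ≤ B := by
  have hderiv : ∀ s ∈ uIcc θ b,
      HasDerivAt (fun s => -B * exp (-((s - θ) / B))) (exp (-((s - θ) / B))) s := by
    intro s _
    refine ((((hasDerivAt_id' s).sub_const θ).div_const B).fun_neg.exp.const_mul (-B)).congr_deriv
      ?_
    field_simp
  rw [integral_eq_sub_of_hasDerivAt hderiv
    ((by fun_prop : Continuous fun s => exp (-((s - θ) / B))).intervalIntegrable _ _)]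
  simp only [sub_self, zero_div, neg_zero, exp_zero]
  nlinarith [exp_pos (-((b - θ) / B))]

theorem tendsto_exp_neg_inv_mul_div_nhdsGT_zero {L : ℝ} (hL : 0 < L) :
    Tendsto (fun d => exp (-(L * d)⁻¹) / d) (𝓝[>] 0) (𝓝 0) := by
  have hinv : Tendsto (fun d => (L * d)⁻¹) (𝓝[>] 0) atTop := by
    simpa only [mul_inv] using tendsto_inv_nhdsGT_zero.const_mul_atTop (inv_pos.2 hL)
  have h := ((tendsto_pow_mul_exp_neg_atTop_nhds_zero 1).comp hinv).const_mul L
  rw [mul_zero] at h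
  refine h.congr' (eventually_nhdsWithin_of_forall fun d (hd : 0 < d) => ?_)
  simp only [Function.comp, pow_one]
  field_simp

theorem exists_abs_deriv_le_of_contDiffOn_Icc {f : ℝ → ℝ} {a b : ℝ} (hab : a < b)
    (hf : ContDiffOn ℝ 1 f (Icc a b)) : ∃ M, ∀ x ∈ Ioo a b, |deriv f x| ≤ M := by
  obtain ⟨M, hM⟩ := isCompact_Icc.exists_bound_of_continuousOn
    (hf.continuousOn_derivWithin (uniqueDiffOn_Icc hab) le_rfl)
  refine ⟨M, fun x hx => ?_⟩
  rw [← derivWithin_of_mem_nhds (Icc_mem_nhds hx.1 hx.2)]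
  exact hM x (Ioo_subset_Icc_self hx)

namespace SingularSteadyState

noncomputable def potential (a b c : ℝ) (Δ : ℝ → ℝ) (θ : ℝ) : ℝ :=
  ∫ u in (a + b) / 2..θ, (c * Δ u ^ 2)⁻¹

noncomputable def tail (a b c : ℝ) (Δ : ℝ → ℝ) (θ : ℝ) : ℝ :=
  ∫ s in θ..b, exp (-potential a b c Δ s) * deriv Δ s

noncomputable def correction (a b c : ℝ) (Δ : ℝ → ℝ) (θ : ℝ) : ℝ :=
  tail a b c Δ θ * exp (potential a b c Δ θ) / Δ θ

noncomputable def density (a b c J : ℝ) (Δ : ℝ → ℝ) (θ : ℝ) : ℝ :=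
  if θ ∈ Ioo a b then J * (1 + correction a b c Δ θ) else J

variable {a b c J M θ : ℝ} {Δ : ℝ → ℝ}

theorem continuousOn_inv_mul_sq (hc : 0 < c) (hΔ : ContinuousOn Δ (Ioo a b))
    (hpos : ∀ θ ∈ Ioo a b, 0 < Δ θ) : ContinuousOn (fun u => (c * Δ u ^ 2)⁻¹) (Ioo a b) :=
  (continuousOn_const.mul (hΔ.pow 2)).inv₀ fun u hu => (mul_pos hc (pow_pos (hpos u hu) 2)).ne'

theorem hasDerivAt_potential (hab : a < b) (hc : 0 < c) (hΔ : ContinuousOn Δ (Ioo a b))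
    (hpos : ∀ θ ∈ Ioo a b, 0 < Δ θ) (hθ : θ ∈ Ioo a b) :
    HasDerivAt (potential a b c Δ) (c * Δ θ ^ 2)⁻¹ θ :=
  (continuousOn_inv_mul_sq hc hΔ hpos).hasDerivAt_integral_Ioo
    ⟨by linarith, by linarith⟩ hθ

theorem continuousOn_potential (hab : a < b) (hc : 0 < c) (hΔ : ContinuousOn Δ (Ioo a b))
    (hpos : ∀ θ ∈ Ioo a b, 0 < Δ θ) : ContinuousOn (potential a b c Δ) (Ioo a b) :=
  fun _ hθ => (hasDerivAt_potential hab hc hΔ hpos hθ).continuousAt.continuousWithinAt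

theorem monotoneOn_potential (hab : a < b) (hc : 0 < c) (hΔ : ContinuousOn Δ (Ioo a b))
    (hpos : ∀ θ ∈ Ioo a b, 0 < Δ θ) : MonotoneOn (potential a b c Δ) (Ioo a b) := by
  refine monotoneOn_of_deriv_nonneg (convex_Ioo a b) (continuousOn_potential hab hc hΔ hpos)
    ?_ ?_ <;> rw [interior_Ioo]
  · exact fun _ hθ =>
      (hasDerivAt_potential hab hc hΔ hpos hθ).differentiableAt.differentiableWithinAt
  · intro θ hθ
    rw [(hasDerivAt_potential hab hc hΔ hpos hθ).deriv]
    positivity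

theorem min_div_le_potential_sub (hab : a < b) (hc : 0 < c) (hΔ : ContDiffOn ℝ 1 Δ (Ioo a b))
    (hpos : ∀ θ ∈ Ioo a b, 0 < Δ θ) (hM : ∀ θ ∈ Ioo a b, |deriv Δ θ| ≤ M) {s : ℝ}
    (hθ : θ ∈ Ioo a b) (hs : s ∈ Ioo a b) (hθs : θ ≤ s) :
    min (s - θ) (Δ θ) / (c * ((1 + M) * Δ θ) ^ 2) ≤
      potential a b c Δ s - potential a b c Δ θ := by
  set d := Δ θ
  have hd : 0 < d := hpos θ hθ
  have hM0 : 0 ≤ M := (abs_nonneg _).trans (hM θ hθ)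
  set t := min s (θ + d)
  have hθt : θ ≤ t := le_min hθs (by linarith)
  have hts : t ≤ s := min_le_left _ _
  have hwin : Icc θ t ⊆ Ioo a b := Icc_subset_Ioo hθ.1 (hts.trans_lt hs.2)
  have hdiff : ∀ u ∈ Ioo a b, DifferentiableAt ℝ Δ u := fun u hu =>
    (hΔ.differentiableOn one_ne_zero).differentiableAt (isOpen_Ioo.mem_nhds hu)
  have hΔle : ∀ u ∈ Icc θ t, Δ u ≤ (1 + M) * d := by
    intro u hu
    have hlip := (convex_Ioo a b).norm_image_sub_le_of_norm_deriv_le hdiff hM hθ (hwin hu)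
    rw [Real.norm_eq_abs, Real.norm_eq_abs, abs_of_nonneg (sub_nonneg.2 hu.1)] at hlip
    have hut : u - θ ≤ d := by linarith [hu.2, min_le_right s (θ + d)]
    nlinarith [le_abs_self (Δ u - d)]
  have hΔc := hΔ.continuousOn
  have hgrowth := (convex_Icc θ t).mul_sub_le_image_sub_of_le_deriv
    ((continuousOn_potential hab hc hΔc hpos).mono hwin)
    (fun u hu => (hasDerivAt_potential hab hc hΔc hpos
      (hwin (interior_subset hu))).differentiableAt.differentiableWithinAt)
    (C := (c * ((1 + M) * d) ^ 2)⁻¹) (fun u hu => by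
      have hu' := interior_subset hu
      rw [(hasDerivAt_potential hab hc hΔc hpos (hwin hu')).deriv]
      have := hpos u (hwin hu')
      gcongr
      exact hΔle u hu')
    θ (left_mem_Icc.2 hθt) t (right_mem_Icc.2 hθt) hθt
  have hmono := monotoneOn_potential hab hc hΔc hpos (hwin (right_mem_Icc.2 hθt)) hs hts
  have hwidth : t - θ = min (s - θ) d := by
    rw [← min_sub_sub_right, add_sub_cancel_left]
  rw [div_eq_mul_inv, ← hwidth, mul_comm]
  linarith

theorem continuousOn_tail_integrand (hab : a < b) (hc : 0 < c)
    (hΔ : ContDiffOn ℝ 1 Δ (Ioo a b)) (hpos : ∀ θ ∈ Ioo a b, 0 < Δ θ) :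
    ContinuousOn (fun s => exp (-potential a b c Δ s) * deriv Δ s) (Ioo a b) :=
  (continuousOn_potential hab hc hΔ.continuousOn hpos).neg.rexp.mul
    (hΔ.continuousOn_deriv_of_isOpen isOpen_Ioo le_rfl)

theorem intervalIntegrable_tail_integrand (hab : a < b) (hc : 0 < c)
    (hΔ : ContDiffOn ℝ 1 Δ (Ioo a b)) (hpos : ∀ θ ∈ Ioo a b, 0 < Δ θ)
    (hM : ∀ θ ∈ Ioo a b, |deriv Δ θ| ≤ M) (hθ : θ ∈ Ioo a b) :
    IntervalIntegrable (fun s => exp (-potential a b c Δ s) * deriv Δ s) volume θ b := by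
  have hsub : Ioo θ b ⊆ Ioo a b := Ioo_subset_Ioo_left hθ.1.le
  rw [intervalIntegrable_iff_integrableOn_Ioo_of_le hθ.2.le]
  refine IntegrableOn.of_bound measure_Ioo_lt_top
    (((continuousOn_tail_integrand hab hc hΔ hpos).mono hsub).aestronglyMeasurable
      measurableSet_Ioo)
    (exp (-potential a b c Δ θ) * M)
    ((ae_restrict_iff' measurableSet_Ioo).2 (ae_of_all _ fun s hs => ?_))
  rw [norm_mul, norm_of_nonneg (exp_pos _).le, Real.norm_eq_abs]
  have hEθs := monotoneOn_potential hab hc hΔ.continuousOn hpos hθ (hsub hs) hs.1.le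
  exact mul_le_mul (exp_le_exp.2 (neg_le_neg hEθs)) (hM s (hsub hs)) (abs_nonneg _)
    (exp_pos _).le

theorem hasDerivAt_tail (hab : a < b) (hc : 0 < c) (hΔ : ContDiffOn ℝ 1 Δ (Ioo a b))
    (hpos : ∀ θ ∈ Ioo a b, 0 < Δ θ) (hM : ∀ θ ∈ Ioo a b, |deriv Δ θ| ≤ M)
    (hθ : θ ∈ Ioo a b) :
    HasDerivAt (tail a b c Δ) (-(exp (-potential a b c Δ θ) * deriv Δ θ)) θ :=
  have hcont := continuousOn_tail_integrand hab hc hΔ hpos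
  integral_hasDerivAt_left (intervalIntegrable_tail_integrand hab hc hΔ hpos hM hθ)
    (hcont.stronglyMeasurableAtFilter isOpen_Ioo θ hθ)
    (hcont.continuousAt (isOpen_Ioo.mem_nhds hθ))

theorem abs_tail_mul_exp_potential_le (hab : a < b) (hc : 0 < c)
    (hΔ : ContDiffOn ℝ 1 Δ (Ioo a b)) (hpos : ∀ θ ∈ Ioo a b, 0 < Δ θ)
    (hM : ∀ θ ∈ Ioo a b, |deriv Δ θ| ≤ M) (hθ : θ ∈ Ioo a b) :
    |tail a b c Δ θ * exp (potential a b c Δ θ)| ≤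
      M * (c * ((1 + M) * Δ θ) ^ 2 + (b - a) * exp (-(Δ θ / (c * ((1 + M) * Δ θ) ^ 2)))) := by
  set d := Δ θ
  set B := c * ((1 + M) * d) ^ 2
  have hM0 : 0 ≤ M := (abs_nonneg _).trans (hM θ hθ)
  have hB : 0 < B := by have := hpos θ hθ; positivity
  have hkernel : ∀ s ∈ Ioo θ b,
      ‖exp (-potential a b c Δ s) * deriv Δ s * exp (potential a b c Δ θ)‖ ≤
        M * (exp (-((s - θ) / B)) + exp (-(d / B))) := by
    intro s hs
    have hs' : s ∈ Ioo a b := Ioo_subset_Ioo_left hθ.1.le hs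
    have hgrowth := min_div_le_potential_sub hab hc hΔ hpos hM hθ hs' hs.1.le
    have hmin : exp (-(min (s - θ) d / B)) ≤ exp (-((s - θ) / B)) + exp (-(d / B)) := by
      rcases min_choice (s - θ) d with h | h <;> rw [h] <;>
        linarith [exp_pos (-((s - θ) / B)), exp_pos (-(d / B))]
    rw [Real.norm_eq_abs, mul_right_comm, abs_mul, ← exp_add, abs_of_pos (exp_pos _), mul_comm]
    refine mul_le_mul (hM s hs') ((exp_le_exp.2 ?_).trans hmin) (exp_pos _).le hM0
    linarith
  have hexp_int : IntervalIntegrable (fun s => exp (-((s - θ) / B))) volume θ b :=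
    (by fun_prop : Continuous fun s => exp (-((s - θ) / B))).intervalIntegrable _ _
  have hint : ∫ s in θ..b, M * (exp (-((s - θ) / B)) + exp (-(d / B))) =
      M * ((∫ s in θ..b, exp (-((s - θ) / B))) + (b - θ) * exp (-(d / B))) := by
    rw [intervalIntegral.integral_const_mul,
      intervalIntegral.integral_add hexp_int intervalIntegrable_const,
      intervalIntegral.integral_const, smul_eq_mul]
  rw [tail, ← intervalIntegral.integral_mul_const, ← Real.norm_eq_abs]
  refine (intervalIntegral.norm_integral_le_of_norm_le hθ.2.le ?_
    ((hexp_int.add (intervalIntegrable_const (c := exp (-(d / B))))).const_mul M)).trans ?_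
  · filter_upwards [Ioo_ae_eq_Ioc.mem_iff] with s hs hsIoc using hkernel s (hs.2 hsIoc)
  rw [hint]
  gcongr
  · exact integral_exp_neg_sub_div_le hB
  · linarith [hθ.1]

theorem abs_correction_le (hab : a < b) (hc : 0 < c) (hΔ : ContDiffOn ℝ 1 Δ (Ioo a b))
    (hpos : ∀ θ ∈ Ioo a b, 0 < Δ θ) (hM : ∀ θ ∈ Ioo a b, |deriv Δ θ| ≤ M)
    (hθ : θ ∈ Ioo a b) :
    |correction a b c Δ θ| ≤
      M * (c * (1 + M) ^ 2 * Δ θ + (b - a) * (exp (-(c * (1 + M) ^ 2 * Δ θ)⁻¹) / Δ θ)) := by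
  have hd := hpos θ hθ
  have hc' := hc.ne'
  have hM1 : 1 + M ≠ 0 := by linarith [(abs_nonneg _).trans (hM θ hθ)]
  have hrate : Δ θ / (c * ((1 + M) * Δ θ) ^ 2) = (c * (1 + M) ^ 2 * Δ θ)⁻¹ := by
    field_simp
  rw [correction, abs_div, abs_of_pos hd, div_le_iff₀ hd]
  refine (abs_tail_mul_exp_potential_le hab hc hΔ hpos hM hθ).trans (le_of_eq ?_)
  rw [hrate]
  field_simp

theorem tendsto_correction (hab : a < b) (hc : 0 < c) (hΔ : ContDiffOn ℝ 1 Δ (Ioo a b))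
    (hpos : ∀ θ ∈ Ioo a b, 0 < Δ θ) (hM : ∀ θ ∈ Ioo a b, |deriv Δ θ| ≤ M) {e : ℝ}
    (hΔe : Tendsto Δ (𝓝[Ioo a b] e) (𝓝 0)) :
    Tendsto (correction a b c Δ) (𝓝[Ioo a b] e) (𝓝 0) := by
  set L := c * (1 + M) ^ 2
  have hL : 0 < L := by
    have hM0 : 0 ≤ M := (abs_nonneg _).trans (hM ((a + b) / 2) ⟨by linarith, by linarith⟩)
    positivity
  have hΔe' : Tendsto Δ (𝓝[Ioo a b] e) (𝓝[>] 0) :=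
    tendsto_nhdsWithin_iff.2 ⟨hΔe, eventually_nhdsWithin_of_forall hpos⟩
  have hbound : Tendsto (fun d => M * (L * d + (b - a) * (exp (-(L * d)⁻¹) / d)))
      (𝓝[>] 0) (𝓝 0) := by
    have hlin : Tendsto (fun d => L * d) (𝓝[>] 0) (𝓝 0) :=
      tendsto_nhdsWithin_of_tendsto_nhds (by simpa using (continuous_const_mul L).tendsto 0)
    simpa using
      (hlin.add ((tendsto_exp_neg_inv_mul_div_nhdsGT_zero hL).const_mul (b - a))).const_mul M
  exact squeeze_zero_norm' (eventually_nhdsWithin_of_forall fun θ hθ =>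
    abs_correction_le hab hc hΔ hpos hM hθ) (hbound.comp hΔe')

theorem density_of_mem (hθ : θ ∈ Ioo a b) :
    density a b c J Δ θ = J * (1 + correction a b c Δ θ) :=
  if_pos hθ

theorem density_left : density a b c J Δ a = J := if_neg (by simp)

theorem density_right : density a b c J Δ b = J := if_neg (by simp)

theorem contDiffOn_density (hab : a < b) (hc : 0 < c) (hΔ : ContDiffOn ℝ 1 Δ (Ioo a b))
    (hpos : ∀ θ ∈ Ioo a b, 0 < Δ θ) (hM : ∀ θ ∈ Ioo a b, |deriv Δ θ| ≤ M) :
    ContDiffOn ℝ 1 (density a b c J Δ) (Ioo a b) := by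
  have hΔc := hΔ.continuousOn
  have hpotential : ContDiffOn ℝ 1 (potential a b c Δ) (Ioo a b) :=
    contDiffOn_one_of_hasDerivAt isOpen_Ioo
      (fun _ hθ => hasDerivAt_potential hab hc hΔc hpos hθ)
      (continuousOn_inv_mul_sq hc hΔc hpos)
  have htail : ContDiffOn ℝ 1 (tail a b c Δ) (Ioo a b) :=
    contDiffOn_one_of_hasDerivAt isOpen_Ioo (fun _ hθ => hasDerivAt_tail hab hc hΔ hpos hM hθ)
      (continuousOn_tail_integrand hab hc hΔ hpos).neg
  have hcorrection : ContDiffOn ℝ 1 (correction a b c Δ) (Ioo a b) :=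
    (htail.mul hpotential.exp).div hΔ fun θ hθ => (hpos θ hθ).ne'
  exact (contDiffOn_const.mul (contDiffOn_const.add hcorrection)).congr
    fun θ hθ => density_of_mem hθ

theorem hasDerivAt_mul_density (hab : a < b) (hc : 0 < c) (hΔ : ContDiffOn ℝ 1 Δ (Ioo a b))
    (hpos : ∀ θ ∈ Ioo a b, 0 < Δ θ) (hM : ∀ θ ∈ Ioo a b, |deriv Δ θ| ≤ M)
    (hθ : θ ∈ Ioo a b) :
    HasDerivAt (fun s => Δ s * density a b c J Δ s)
      (J * correction a b c Δ θ / (c * Δ θ)) θ := by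
  have hΔθ : HasDerivAt Δ (deriv Δ θ) θ :=
    ((hΔ.differentiableOn one_ne_zero).differentiableAt (isOpen_Ioo.mem_nhds hθ)).hasDerivAt
  have hprod := (hΔθ.add ((hasDerivAt_tail hab hc hΔ hpos hM hθ).mul
    (hasDerivAt_potential hab hc hΔ.continuousOn hpos hθ).exp)).const_mul J
  have heq : (fun s => Δ s * density a b c J Δ s) =ᶠ[𝓝 θ]
      fun s => J * (Δ s + tail a b c Δ s * exp (potential a b c Δ s)) := by
    filter_upwards [isOpen_Ioo.mem_nhds hθ] with s hs
    rw [density_of_mem hs, correction]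
    field_simp [(hpos s hs).ne']
  refine (hprod.congr_of_eventuallyEq heq).congr_deriv ?_
  have := (hpos θ hθ).ne'
  rw [correction, exp_neg]
  field_simp
  ring

theorem density_equation (hab : a < b) (hc : 0 < c) (hΔ : ContDiffOn ℝ 1 Δ (Ioo a b))
    (hpos : ∀ θ ∈ Ioo a b, 0 < Δ θ) (hM : ∀ θ ∈ Ioo a b, |deriv Δ θ| ≤ M)
    (hθ : θ ∈ Ioo a b) :
    -J = -density a b c J Δ θ + c * Δ θ * deriv (fun s => Δ s * density a b c J Δ s) θ := by
  rw [(hasDerivAt_mul_density hab hc hΔ hpos hM hθ).deriv, density_of_mem hθ]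
  field_simp [hc.ne', (hpos θ hθ).ne']
  ring

theorem continuousOn_density (hab : a < b) (hc : 0 < c) (hΔ : ContDiffOn ℝ 1 Δ (Ioo a b))
    (hΔc : ContinuousOn Δ (Icc a b)) (hΔa : Δ a = 0) (hΔb : Δ b = 0)
    (hpos : ∀ θ ∈ Ioo a b, 0 < Δ θ) (hM : ∀ θ ∈ Ioo a b, |deriv Δ θ| ≤ M) :
    ContinuousOn (density a b c J Δ) (Icc a b) := by
  have hendpoint : ∀ e ∈ Icc a b, Δ e = 0 → density a b c J Δ e = J →
      ContinuousWithinAt (density a b c J Δ) (Ioo a b) e := by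
    intro e he hΔe hPe
    have hΔe' : Tendsto Δ (𝓝[Ioo a b] e) (𝓝 0) :=
      hΔe ▸ ((hΔc e he).mono Ioo_subset_Icc_self).tendsto
    have h := ((tendsto_correction hab hc hΔ hpos hM hΔe').const_add 1).const_mul J
    rw [add_zero, mul_one] at h
    rw [ContinuousWithinAt, hPe]
    exact h.congr' (eventually_nhdsWithin_of_forall fun θ hθ => (density_of_mem hθ).symm)
  intro θ hθ
  rw [continuousWithinAt_Icc_iff_Ioo]
  rcases hθ.1.eq_or_lt with rfl | haθ
  · exact hendpoint _ hθ hΔa density_left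
  rcases hθ.2.eq_or_lt with rfl | hθb
  · exact hendpoint _ hθ hΔb density_right
  exact ((contDiffOn_density hab hc hΔ hpos hM).continuousOn.continuousAt
    (isOpen_Ioo.mem_nhds ⟨haθ, hθb⟩)).continuousWithinAt

end SingularSteadyState

open SingularSteadyState in
/-- Existence of a solution of the singular steady-state equation
`−J = −P(θ) + (σ²/2) Δ(θ) (Δ·P)'(θ)` on `(a,b)`, continuous up to the endpoints with
boundary values `P(a) = P(b) = J`, where `Δ` is continuously differentiable on `[a,b]`,
vanishes at the endpoints and is positive inside. -/
theorem stmt_7 (a b σ J : ℝ) (Δ : ℝ → ℝ)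
    (hab : a < b)
    (hΔ : ContDiffOn ℝ 1 Δ (Icc a b))
    (hΔa : Δ a = 0) (hΔb : Δ b = 0)
    (hΔpos : ∀ θ ∈ Ioo a b, 0 < Δ θ)
    (hσ : 0 < σ) :
    ∃ P : ℝ → ℝ, ContinuousOn P (Icc a b) ∧ ContDiffOn ℝ 1 P (Ioo a b) ∧
      P a = J ∧ P b = J ∧
      ∀ θ ∈ Ioo a b,
        -J = -P θ + σ ^ 2 / 2 * Δ θ * deriv (fun s => Δ s * P s) θ := by
  obtain ⟨M, hM⟩ := exists_abs_deriv_le_of_contDiffOn_Icc hab hΔ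
  have hc : 0 < σ ^ 2 / 2 := by positivity
  have hΔ' := hΔ.mono Ioo_subset_Icc_self
  exact ⟨density a b (σ ^ 2 / 2) J Δ,
    continuousOn_density hab hc hΔ' hΔ.continuousOn hΔa hΔb hΔpos hM,
    contDiffOn_density hab hc hΔ' hΔpos hM, density_left, density_right,
    fun θ hθ => density_equation hab hc hΔ' hΔpos hM hθ⟩
end

section
/- Let Δ : ℝ → ℝ be three times continuously differentiable and 1-periodic, and let σ ∈ ℝ. Define P₁ := (1/2)ΔΔ', J₂ := (1/4)∫₀¹ (Δ(θ)Δ'(θ))² dθ, P₂ := (1/2)Δ²(Δ')² + (1/4)Δ³Δ'' + J₂, and set P := 1 + σ²P₁ + σ⁴P₂ and J := 1 + σ⁴J₂. Then for every θ, −J + P(θ) − (σ²/2) Δ(θ) (Δ·P)'(θ) = −(σ⁶/2) Δ(θ) (Δ·P₂)'(θ); that is, the second-order expansion satisfies the steady-state equation −J = −P + (σ²/2)Δ(ΔP)' up to an error of order σ⁶. -/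
open Real Filter Set Topology intervalIntegral

/-!
Writing `P = 1 + σ²P₁ + σ⁴P₂`, the residual of the steady-state equation is a polynomial in `σ²`
whose coefficients are the equations of the perturbation hierarchy: `P₁ = ½ΔΔ'` at order `σ²` and
`P₂ - J₂ = ½Δ(ΔP₁)'` at order `σ⁴`. With `P₁ = ½ΔΔ'` one has `½Δ(ΔP₁)' = ½Δ²Δ'² + ¼Δ³Δ''`, so both
vanish and only the order-`σ⁶` term `-(σ⁶/2)Δ(ΔP₂)'` is left.
-/

section IteratedDerivatives

variable {𝕜 F : Type*} [NontriviallyNormedField 𝕜] [NormedAddCommGroup F] [NormedSpace 𝕜 F]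
  {f : 𝕜 → F}

theorem ContDiff.differentiable_deriv_deriv (hf : ContDiff 𝕜 3 f) :
    Differentiable 𝕜 (deriv (deriv f)) :=
  (hf.deriv' (n := 2)).deriv' (n := 1) |>.differentiable one_ne_zero

theorem ContDiff.differentiable_deriv (hf : ContDiff 𝕜 3 f) : Differentiable 𝕜 (deriv f) :=
  (hf.deriv' (n := 2)).differentiable two_ne_zero

end IteratedDerivatives

theorem steadyState_residual_eq_hierarchy (σ J₂ : ℝ) {Δ P₁ P₂ : ℝ → ℝ} {θ : ℝ}
    (hΔ : DifferentiableAt ℝ Δ θ) (h₁ : DifferentiableAt ℝ (fun s => Δ s * P₁ s) θ)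
    (h₂ : DifferentiableAt ℝ (fun s => Δ s * P₂ s) θ) :
    -(1 + σ ^ 4 * J₂) + (1 + σ ^ 2 * P₁ θ + σ ^ 4 * P₂ θ)
        - σ ^ 2 / 2 * Δ θ * deriv (fun s => Δ s * (1 + σ ^ 2 * P₁ s + σ ^ 4 * P₂ s)) θ
      = σ ^ 2 * (P₁ θ - 1 / 2 * Δ θ * deriv Δ θ)
        + σ ^ 4 * (P₂ θ - J₂ - 1 / 2 * Δ θ * deriv (fun s => Δ s * P₁ s) θ)
        - σ ^ 6 / 2 * Δ θ * deriv (fun s => Δ s * P₂ s) θ := by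
  have hsplit : (fun s => Δ s * (1 + σ ^ 2 * P₁ s + σ ^ 4 * P₂ s))
      = fun s => Δ s + σ ^ 2 * (Δ s * P₁ s) + σ ^ 4 * (Δ s * P₂ s) := by
    funext s; ring
  have hderiv : HasDerivAt (fun s => Δ s + σ ^ 2 * (Δ s * P₁ s) + σ ^ 4 * (Δ s * P₂ s))
      (deriv Δ θ + σ ^ 2 * deriv (fun s => Δ s * P₁ s) θ
        + σ ^ 4 * deriv (fun s => Δ s * P₂ s) θ) θ :=
    (hΔ.hasDerivAt.add (h₁.hasDerivAt.const_mul _)).add (h₂.hasDerivAt.const_mul _)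
  rw [hsplit, hderiv.deriv]
  ring

theorem hasDerivAt_mul_half_mul_deriv {Δ : ℝ → ℝ} {θ : ℝ} (h₀ : DifferentiableAt ℝ Δ θ)
    (h₁ : DifferentiableAt ℝ (deriv Δ) θ) :
    HasDerivAt (fun s => Δ s * (1 / 2 * Δ s * deriv Δ s))
      (Δ θ * deriv Δ θ ^ 2 + 1 / 2 * Δ θ ^ 2 * deriv (deriv Δ) θ) θ :=
  (h₀.hasDerivAt.fun_mul ((h₀.hasDerivAt.const_mul (1 / 2)).fun_mul h₁.hasDerivAt)).congr_deriv
    (by ring)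

theorem stmt_9_general (σ : ℝ) (Δ : ℝ → ℝ) (hΔ : ContDiff ℝ 3 Δ)
    (P₁ P₂ P : ℝ → ℝ) (J₂ J : ℝ)
    (hP₁ : ∀ θ, P₁ θ = 1 / 2 * Δ θ * deriv Δ θ)
    (hP₂ : ∀ θ, P₂ θ = 1 / 2 * (Δ θ) ^ 2 * (deriv Δ θ) ^ 2
        + 1 / 4 * (Δ θ) ^ 3 * deriv (deriv Δ) θ + J₂)
    (hP : ∀ θ, P θ = 1 + σ ^ 2 * P₁ θ + σ ^ 4 * P₂ θ)
    (hJ : J = 1 + σ ^ 4 * J₂) :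
    ∀ θ : ℝ,
      -J + P θ - σ ^ 2 / 2 * Δ θ * deriv (fun s => Δ s * P s) θ
        = -(σ ^ 6 / 2) * Δ θ * deriv (fun s => Δ s * P₂ s) θ := by
  intro θ
  have hΔ₀ : Differentiable ℝ Δ := hΔ.differentiable (by norm_num)
  have hΔ₁ := hΔ.differentiable_deriv
  have hΔ₂ := hΔ.differentiable_deriv_deriv
  have hP₁' : P₁ = fun s => 1 / 2 * Δ s * deriv Δ s := funext hP₁
  have hΔP₁ : DifferentiableAt ℝ (fun s => Δ s * P₁ s) θ := by rw [hP₁']; fun_prop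
  have hΔP₂ : DifferentiableAt ℝ (fun s => Δ s * P₂ s) θ := by rw [funext hP₂]; fun_prop
  obtain rfl : P = fun s => 1 + σ ^ 2 * P₁ s + σ ^ 4 * P₂ s := funext hP
  rw [hJ, steadyState_residual_eq_hierarchy σ J₂ (hΔ₀ θ) hΔP₁ hΔP₂, hP₁',
    (hasDerivAt_mul_half_mul_deriv (hΔ₀ θ) (hΔ₁ θ)).deriv, hP₂ θ]
  ring

/-- For `Δ` three times continuously differentiable and 1-periodic,
with `P₁ = (1/2)ΔΔ'`, `J₂ = (1/4)∫₀¹(ΔΔ')²`, `P₂ = (1/2)Δ²(Δ')² + (1/4)Δ³Δ'' + J₂`,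
`P = 1 + σ²P₁ + σ⁴P₂` and `J = 1 + σ⁴J₂`, the residual of the steady-state equation
equals `−(σ⁶/2) Δ (Δ·P₂)'`; i.e. the second-order expansion satisfies
`−J = −P + (σ²/2)Δ(ΔP)'` up to an error of order `σ⁶`. -/
theorem stmt_9 (σ : ℝ) (Δ : ℝ → ℝ) (hΔ : ContDiff ℝ 3 Δ)
    (hper : Function.Periodic Δ 1)
    (P₁ P₂ P : ℝ → ℝ) (J₂ J : ℝ)
    (hP₁ : ∀ θ, P₁ θ = 1 / 2 * Δ θ * deriv Δ θ)
    (hJ₂ : J₂ = 1 / 4 * ∫ θ in (0:ℝ)..1, (Δ θ * deriv Δ θ) ^ 2)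
    (hP₂ : ∀ θ, P₂ θ = 1 / 2 * (Δ θ) ^ 2 * (deriv Δ θ) ^ 2
        + 1 / 4 * (Δ θ) ^ 3 * deriv (deriv Δ) θ + J₂)
    (hP : ∀ θ, P θ = 1 + σ ^ 2 * P₁ θ + σ ^ 4 * P₂ θ)
    (hJ : J = 1 + σ ^ 4 * J₂) :
    ∀ θ : ℝ,
      -J + P θ - σ ^ 2 / 2 * Δ θ * deriv (fun s => Δ s * P s) θ
        = -(σ ^ 6 / 2) * Δ θ * deriv (fun s => Δ s * P₂ s) θ :=
  stmt_9_general σ Δ hΔ P₁ P₂ P J₂ J hP₁ hP₂ hP hJ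
end

section
/- Let a, b, c ∈ ℝ with D² := a + 4bπ² + 16cπ⁴ > 0, and set Δ₀(θ) := √2 sin(2πθ)/D where D := √(a + 4bπ² + 16cπ⁴). For ν ∈ ℝ define r_ν(θ) := (Δ₀'(θ))³ − bν Δ₀''(θ) + Δ₀(θ)(aν + 3Δ₀'(θ)Δ₀''(θ)) + cν Δ₀⁗(θ). Then ∫₀¹ sin(2πθ) [(Δ₀')³ + 3Δ₀Δ₀'Δ₀''] dθ = 0 and ∫₀¹ sin(2πθ)[aΔ₀ − bΔ₀'' + cΔ₀⁗] dθ = D/√2 ≠ 0; consequently ∫₀¹ sin(2πθ) r_ν(θ) dθ = 0 if and only if ν = 0. -/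
open Real Filter Set Topology intervalIntegral

lemma hd_sin' (x : ℝ) : HasDerivAt (fun t : ℝ => Real.sin (2*π*t)) (2*π * Real.cos (2*π*x)) x := by
  have h : HasDerivAt (fun t : ℝ => 2*π*t) (2*π) x := by
    simpa using (hasDerivAt_id x).const_mul (2*π)
  have := (Real.hasDerivAt_sin (2*π*x)).comp x h
  exact this.congr_deriv (by ring)

lemma hd_cos' (x : ℝ) : HasDerivAt (fun t : ℝ => Real.cos (2*π*t)) (-(2*π) * Real.sin (2*π*x)) x := by
  have h : HasDerivAt (fun t : ℝ => 2*π*t) (2*π) x := by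
    simpa using (hasDerivAt_id x).const_mul (2*π)
  have := (Real.hasDerivAt_cos (2*π*x)).comp x h
  exact this.congr_deriv (by ring)

lemma hd_sinK (k x : ℝ) : HasDerivAt (fun t : ℝ => k * Real.sin (2*π*t)) (k * (2*π) * Real.cos (2*π*x)) x := by
  have := (hd_sin' x).const_mul k
  exact this.congr_deriv (by ring)

lemma hd_cosK (k x : ℝ) : HasDerivAt (fun t : ℝ => k * Real.cos (2*π*t)) (-(k * (2*π)) * Real.sin (2*π*x)) x := by
  have := (hd_cos' x).const_mul k
  exact this.congr_deriv (by ring)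

/-- With `D = √(a + 4bπ² + 16cπ⁴)` (so `D² > 0`),
`Δ₀(θ) = √2 sin(2πθ)/D`, and for `ν ∈ ℝ` the Fredholm right-hand side
`r_ν = (Δ₀')³ − bνΔ₀'' + Δ₀(aν + 3Δ₀'Δ₀'') + cνΔ₀⁗`: one has
`∫₀¹ sin(2πθ)[(Δ₀')³ + 3Δ₀Δ₀'Δ₀''] dθ = 0`,
`∫₀¹ sin(2πθ)[aΔ₀ − bΔ₀'' + cΔ₀⁗] dθ = D/√2 ≠ 0`, and consequently
`∫₀¹ sin(2πθ) r_ν(θ) dθ = 0 ↔ ν = 0`. -/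
theorem stmt_13 (a b c : ℝ)
    (hD : 0 < a + 4 * b * π ^ 2 + 16 * c * π ^ 4)
    (D : ℝ) (hDdef : D = Real.sqrt (a + 4 * b * π ^ 2 + 16 * c * π ^ 4))
    (Δ₀ : ℝ → ℝ)
    (hΔ₀ : ∀ θ, Δ₀ θ = Real.sqrt 2 * Real.sin (2 * π * θ) / D)
    (r : ℝ → ℝ → ℝ)
    (hr : ∀ ν θ, r ν θ = (deriv Δ₀ θ) ^ 3 - b * ν * iteratedDeriv 2 Δ₀ θ
        + Δ₀ θ * (a * ν + 3 * deriv Δ₀ θ * iteratedDeriv 2 Δ₀ θ)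
        + c * ν * iteratedDeriv 4 Δ₀ θ) :
    (∫ θ in (0:ℝ)..1, Real.sin (2 * π * θ) *
        ((deriv Δ₀ θ) ^ 3 + 3 * Δ₀ θ * deriv Δ₀ θ * iteratedDeriv 2 Δ₀ θ)) = 0 ∧
    (∫ θ in (0:ℝ)..1, Real.sin (2 * π * θ) *
        (a * Δ₀ θ - b * iteratedDeriv 2 Δ₀ θ + c * iteratedDeriv 4 Δ₀ θ))
      = D / Real.sqrt 2 ∧
    D / Real.sqrt 2 ≠ 0 ∧
    (∀ ν : ℝ, (∫ θ in (0:ℝ)..1, Real.sin (2 * π * θ) * r ν θ) = 0 ↔ ν = 0) := by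
  have hDpos : 0 < D := by rw [hDdef]; exact Real.sqrt_pos.mpr hD
  have hD2 : D ^ 2 = a + 4 * b * π ^ 2 + 16 * c * π ^ 4 := by
    rw [hDdef, Real.sq_sqrt hD.le]
  set K : ℝ := Real.sqrt 2 / D with hK
  have hΔ' : Δ₀ = fun θ => K * Real.sin (2 * π * θ) := by
    funext θ; rw [hΔ₀]; ring
  have h1 : deriv Δ₀ = fun θ => K * (2 * π) * Real.cos (2 * π * θ) := by
    rw [hΔ']; funext θ; exact (hd_sinK K θ).deriv
  have h2 : iteratedDeriv 2 Δ₀ = fun θ => -(K * (2 * π) ^ 2) * Real.sin (2 * π * θ) := by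
    have e : iteratedDeriv 2 Δ₀ = deriv (deriv Δ₀) := by
      simp [iteratedDeriv_succ, iteratedDeriv_zero]
    rw [e, h1]; funext θ
    rw [(hd_cosK (K * (2 * π)) θ).deriv]; ring
  have h3 : iteratedDeriv 3 Δ₀ = fun θ => -(K * (2 * π) ^ 3) * Real.cos (2 * π * θ) := by
    have e : iteratedDeriv 3 Δ₀ = deriv (iteratedDeriv 2 Δ₀) := iteratedDeriv_succ
    rw [e, h2]; funext θ
    rw [(hd_sinK (-(K * (2 * π) ^ 2)) θ).deriv]; ring
  have h4 : iteratedDeriv 4 Δ₀ = fun θ => K * (2 * π) ^ 4 * Real.sin (2 * π * θ) := by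
    have e : iteratedDeriv 4 Δ₀ = deriv (iteratedDeriv 3 Δ₀) := iteratedDeriv_succ
    rw [e, h3]; funext θ
    rw [(hd_cosK (-(K * (2 * π) ^ 3)) θ).deriv]; ring
  -- boundary values
  have hs1 : Real.sin (2 * π * 1) = 0 := by rw [mul_one]; exact Real.sin_two_pi
  have hc1 : Real.cos (2 * π * 1) = 1 := by rw [mul_one]; exact Real.cos_two_pi
  have hs0 : Real.sin (2 * π * 0) = 0 := by rw [mul_zero]; exact Real.sin_zero
  have hc0 : Real.cos (2 * π * 0) = 1 := by rw [mul_zero]; exact Real.cos_zero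
  -- First integral
  have I1 : (∫ θ in (0:ℝ)..1, Real.sin (2 * π * θ) *
      ((deriv Δ₀ θ) ^ 3 + 3 * Δ₀ θ * deriv Δ₀ θ * iteratedDeriv 2 Δ₀ θ)) = 0 := by
    have hder : ∀ x ∈ uIcc (0:ℝ) 1, HasDerivAt
        (fun θ : ℝ => -(K^3*π^2) * Real.cos (2*π*θ)^4 - 3*K^3*π^2 * Real.sin (2*π*θ)^4)
        (Real.sin (2 * π * x) *
          ((deriv Δ₀ x) ^ 3 + 3 * Δ₀ x * deriv Δ₀ x * iteratedDeriv 2 Δ₀ x)) x := by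
      intro x _
      have h := (((hd_cos' x).pow 4).const_mul (-(K^3*π^2))).sub
        (((hd_sin' x).pow 4).const_mul (3*K^3*π^2))
      refine h.congr_deriv (Eq.symm ?_)
      simp only [h1, h2]; simp only [hΔ']
      push_cast
      ring
    have hint : IntervalIntegrable (fun θ : ℝ => Real.sin (2 * π * θ) *
        ((deriv Δ₀ θ) ^ 3 + 3 * Δ₀ θ * deriv Δ₀ θ * iteratedDeriv 2 Δ₀ θ)) MeasureTheory.volume 0 1 := by
      have he : (fun θ : ℝ => Real.sin (2 * π * θ) *
          ((deriv Δ₀ θ) ^ 3 + 3 * Δ₀ θ * deriv Δ₀ θ * iteratedDeriv 2 Δ₀ θ)) =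
          (fun θ : ℝ => Real.sin (2 * π * θ) *
          ((K * (2 * π) * Real.cos (2 * π * θ)) ^ 3 +
            3 * (K * Real.sin (2 * π * θ)) * (K * (2 * π) * Real.cos (2 * π * θ)) *
            (-(K * (2 * π) ^ 2) * Real.sin (2 * π * θ)))) := by
        funext θ; simp only [h1, h2]; simp only [hΔ']
      rw [he]
      apply Continuous.intervalIntegrable; fun_prop
    rw [intervalIntegral.integral_eq_sub_of_hasDerivAt hder hint]
    rw [hs1, hc1, hs0, hc0]; ring
  -- Second integral
  have I2 : (∫ θ in (0:ℝ)..1, Real.sin (2 * π * θ) *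
      (a * Δ₀ θ - b * iteratedDeriv 2 Δ₀ θ + c * iteratedDeriv 4 Δ₀ θ))
      = D / Real.sqrt 2 := by
    set M : ℝ := K * (a + 4 * b * π ^ 2 + 16 * c * π ^ 4) with hM
    have hder : ∀ x ∈ uIcc (0:ℝ) 1, HasDerivAt
        (fun θ : ℝ => M * θ / 2 - M / (8*π) * Real.sin (2*π*(2*θ)))
        (Real.sin (2 * π * x) *
          (a * Δ₀ x - b * iteratedDeriv 2 Δ₀ x + c * iteratedDeriv 4 Δ₀ x)) x := by
      intro x _
      have hg : HasDerivAt (fun θ : ℝ => Real.sin (2*π*(2*θ))) (2 * (2*π * Real.cos (2*π*(2*x)))) x := by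
        have hid : HasDerivAt (fun θ : ℝ => 2*θ) (2:ℝ) x := by
          simpa using (hasDerivAt_id x).const_mul (2:ℝ)
        have := (hd_sin' (2*x)).comp x hid
        exact this.congr_deriv (by ring)
      have h := (((hasDerivAt_id x).const_mul M).div_const 2).sub (hg.const_mul (M / (8*π)))
      refine h.congr_deriv (Eq.symm ?_)
      simp only [h2, h4]; simp only [hΔ']
      have hcd : Real.cos (2*π*(2*x)) = 1 - 2 * Real.sin (2*π*x)^2 := by
        have e : 2*π*(2*x) = 2*(2*π*x) := by ring
        rw [e, Real.cos_two_mul]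
        have := Real.sin_sq_add_cos_sq (2*π*x)
        nlinarith [this]
      rw [hcd]
      have hπ := Real.pi_ne_zero
      field_simp
      ring
    have hint : IntervalIntegrable (fun θ : ℝ => Real.sin (2 * π * θ) *
        (a * Δ₀ θ - b * iteratedDeriv 2 Δ₀ θ + c * iteratedDeriv 4 Δ₀ θ)) MeasureTheory.volume 0 1 := by
      have he : (fun θ : ℝ => Real.sin (2 * π * θ) *
          (a * Δ₀ θ - b * iteratedDeriv 2 Δ₀ θ + c * iteratedDeriv 4 Δ₀ θ)) =
          (fun θ : ℝ => Real.sin (2 * π * θ) *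
          (a * (K * Real.sin (2 * π * θ)) - b * (-(K * (2 * π) ^ 2) * Real.sin (2 * π * θ)) +
           c * (K * (2 * π) ^ 4 * Real.sin (2 * π * θ)))) := by
        funext θ; simp only [h2, h4]; simp only [hΔ']
      rw [he]
      apply Continuous.intervalIntegrable; fun_prop
    rw [intervalIntegral.integral_eq_sub_of_hasDerivAt hder hint]
    have hs2 : Real.sin (2*π*(2*(1:ℝ))) = 0 := by
      have e : 2*π*(2*(1:ℝ)) = 2*(2*π) := by ring
      rw [e, Real.sin_two_mul, Real.sin_two_pi]; ring
    have hs3 : Real.sin (2*π*(2*(0:ℝ))) = 0 := by norm_num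
    rw [hs2, hs3]
    have h2pos : (0:ℝ) < Real.sqrt 2 := Real.sqrt_pos.mpr (by norm_num)
    have h2sq : Real.sqrt 2 ^ 2 = 2 := Real.sq_sqrt (by norm_num)
    rw [hM, hK, ← hD2]
    field_simp
    rw [h2sq]; ring
  -- ≠ 0
  have hne : D / Real.sqrt 2 ≠ 0 := by
    have h2pos : (0:ℝ) < Real.sqrt 2 := Real.sqrt_pos.mpr (by norm_num)
    positivity
  refine ⟨I1, I2, hne, fun ν => ?_⟩
  have hsplit : (fun θ : ℝ => Real.sin (2 * π * θ) * r ν θ) =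
      (fun θ : ℝ => Real.sin (2 * π * θ) *
        ((deriv Δ₀ θ) ^ 3 + 3 * Δ₀ θ * deriv Δ₀ θ * iteratedDeriv 2 Δ₀ θ) +
        ν * (Real.sin (2 * π * θ) *
        (a * Δ₀ θ - b * iteratedDeriv 2 Δ₀ θ + c * iteratedDeriv 4 Δ₀ θ))) := by
    funext θ; rw [hr]; ring
  have hint1 : IntervalIntegrable (fun θ : ℝ => Real.sin (2 * π * θ) *
      ((deriv Δ₀ θ) ^ 3 + 3 * Δ₀ θ * deriv Δ₀ θ * iteratedDeriv 2 Δ₀ θ)) MeasureTheory.volume 0 1 := by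
    have he : (fun θ : ℝ => Real.sin (2 * π * θ) *
        ((deriv Δ₀ θ) ^ 3 + 3 * Δ₀ θ * deriv Δ₀ θ * iteratedDeriv 2 Δ₀ θ)) =
        (fun θ : ℝ => Real.sin (2 * π * θ) *
        ((K * (2 * π) * Real.cos (2 * π * θ)) ^ 3 +
          3 * (K * Real.sin (2 * π * θ)) * (K * (2 * π) * Real.cos (2 * π * θ)) *
          (-(K * (2 * π) ^ 2) * Real.sin (2 * π * θ)))) := by
      funext θ; simp only [h1, h2]; simp only [hΔ']
    rw [he]
    apply Continuous.intervalIntegrable; fun_prop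
  have hint2 : IntervalIntegrable (fun θ : ℝ => ν * (Real.sin (2 * π * θ) *
      (a * Δ₀ θ - b * iteratedDeriv 2 Δ₀ θ + c * iteratedDeriv 4 Δ₀ θ))) MeasureTheory.volume 0 1 := by
    have he : (fun θ : ℝ => ν * (Real.sin (2 * π * θ) *
        (a * Δ₀ θ - b * iteratedDeriv 2 Δ₀ θ + c * iteratedDeriv 4 Δ₀ θ))) =
        (fun θ : ℝ => ν * (Real.sin (2 * π * θ) *
        (a * (K * Real.sin (2 * π * θ)) - b * (-(K * (2 * π) ^ 2) * Real.sin (2 * π * θ)) +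
         c * (K * (2 * π) ^ 4 * Real.sin (2 * π * θ))))) := by
      funext θ; simp only [h2, h4]; simp only [hΔ']
    rw [he]
    apply Continuous.intervalIntegrable; fun_prop
  rw [hsplit, intervalIntegral.integral_add hint1 hint2, intervalIntegral.integral_const_mul,
    I1, I2, zero_add]
  constructor
  · intro h
    rcases mul_eq_zero.mp h with h | h
    · exact h
    · exact absurd h hne
  · intro h; rw [h, zero_mul]
end

section
/- Let a, b, c ∈ ℝ with D² := a + 4bπ² + 16cπ⁴ > 0 and a ≠ 144cπ⁴, and set ν := 4π²/D², D := √(a + 4bπ² + 16cπ⁴), Δ₀(θ) := √2 sin(2πθ)/D. Then the function Δ₁(θ) := √2 π sin(2πθ) sin(4πθ) / ((a − 144cπ⁴) D) is 1-periodic and satisfies the inhomogeneous fourth-order equation a ν Δ₁(θ) + (1 − bν) Δ₁''(θ) + c ν Δ₁⁗(θ) = (Δ₀'(θ))³ + 3 Δ₀(θ) Δ₀'(θ) Δ₀''(θ) for all θ ∈ ℝ. -/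
/-!
Product-to-sum gives `Δ₁ = A (cos 2πθ − cos 6πθ)` with `A = √2 π / (2 (a − 144cπ⁴) D)`.
The operator `𝒥` acts on `cos kθ` by multiplication with its symbol `aν − (1 − bν)k² + cνk⁴`,
which vanishes at `k = 2π` by the choice of `ν` and equals `−8ν(a − 144cπ⁴)` at `k = 6π`.
On the other side, the nonlinearity `(f')³ + 3ff'f''` sends `f = B sin kθ` to `(Bk)³ cos 3kθ`,
so both sides are multiples of `cos 6πθ` and the coefficients agree.
-/

open Real

lemma iteratedDeriv_even_cos_mul (k : ℝ) (n : ℕ) :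
    iteratedDeriv (2 * n) (fun x => cos (k * x)) = fun x => (-k ^ 2) ^ n * cos (k * x) := by
  rw [iteratedDeriv_comp_const_mul contDiff_cos, iteratedDeriv_even_cos]
  funext x
  simp only [Pi.mul_apply, Pi.pow_apply, Pi.neg_apply, Pi.one_apply]
  rw [pow_mul, neg_pow (k ^ 2)]
  ring

lemma iteratedDeriv_even_sin_mul (k : ℝ) (n : ℕ) :
    iteratedDeriv (2 * n) (fun x => sin (k * x)) = fun x => (-k ^ 2) ^ n * sin (k * x) := by
  rw [iteratedDeriv_comp_const_mul contDiff_sin, iteratedDeriv_even_sin]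
  funext x
  simp only [Pi.mul_apply, Pi.pow_apply, Pi.neg_apply, Pi.one_apply]
  rw [pow_mul, neg_pow (k ^ 2)]
  ring

lemma deriv_sin_mul (k : ℝ) : deriv (fun x => sin (k * x)) = fun x => k * cos (k * x) := by
  funext x
  simpa [mul_comm] using ((hasDerivAt_id x).const_mul k).sin.deriv

lemma cos_sub_cos_three_mul (x : ℝ) : cos x - cos (3 * x) = 2 * sin x * sin (2 * x) := by
  rw [cos_sub_cos, show (x + 3 * x) / 2 = 2 * x by ring, show (x - 3 * x) / 2 = -x by ring, sin_neg]
  ring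

lemma periodic_cos_sub_cos_three_mul (A : ℝ) :
    Function.Periodic (fun θ => A * (cos (2 * π * θ) - cos (3 * (2 * π) * θ))) 1 := by
  intro θ
  simp only [mul_add, mul_one]
  rw [cos_add_two_pi, show 3 * (2 * π) = ((3 : ℕ) : ℝ) * (2 * π) by norm_num,
    cos_add_nat_mul_two_pi]

/-- The operator `𝒥` of the paper, with `α = aν`, `β = 1 − bν`, `γ = cν`. -/
noncomputable def fourthOrderOp (α β γ : ℝ) (f : ℝ → ℝ) (x : ℝ) : ℝ :=
  α * f x + β * iteratedDeriv 2 f x + γ * iteratedDeriv 4 f x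

section FourthOrderOp

variable (α β γ : ℝ)

lemma fourthOrderOp_const_mul (A : ℝ) (f : ℝ → ℝ) (x : ℝ) :
    fourthOrderOp α β γ (fun y => A * f y) x = A * fourthOrderOp α β γ f x := by
  simp only [fourthOrderOp, iteratedDeriv_const_mul_field]
  ring

lemma fourthOrderOp_sub {f g : ℝ → ℝ} {x : ℝ} (hf : ContDiffAt ℝ 4 f x) (hg : ContDiffAt ℝ 4 g x) :
    fourthOrderOp α β γ (fun y => f y - g y) x =
      fourthOrderOp α β γ f x - fourthOrderOp α β γ g x := by
  have h2 : (2 : WithTop ℕ∞) ≤ 4 := by norm_num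
  simp only [fourthOrderOp, iteratedDeriv_fun_sub hf hg,
    iteratedDeriv_fun_sub (hf.of_le h2) (hg.of_le h2)]
  ring

lemma fourthOrderOp_cos_mul (k x : ℝ) :
    fourthOrderOp α β γ (fun y => cos (k * y)) x = (α - β * k ^ 2 + γ * k ^ 4) * cos (k * x) := by
  simp only [fourthOrderOp, iteratedDeriv_even_cos_mul k 1, iteratedDeriv_even_cos_mul k 2]
  ring

end FourthOrderOp

lemma sin_mode_cubic (B k x : ℝ) :
    deriv (fun y => B * sin (k * y)) x ^ 3
        + 3 * (B * sin (k * x)) * deriv (fun y => B * sin (k * y)) x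
          * iteratedDeriv 2 (fun y => B * sin (k * y)) x
      = (B * k) ^ 3 * cos (3 * k * x) := by
  simp only [deriv_const_mul_field', iteratedDeriv_const_mul_field, deriv_sin_mul,
    iteratedDeriv_even_sin_mul k 1]
  rw [mul_assoc 3 k x, cos_three_mul]
  linear_combination (-3 * (B * k) ^ 3 * cos (k * x)) * sin_sq_add_cos_sq (k * x)

/-- With `D² = a + 4bπ² + 16cπ⁴ > 0`, `a ≠ 144cπ⁴`, `ν = 4π²/D²`,
`D = √(a + 4bπ² + 16cπ⁴)` and `Δ₀(θ) = √2 sin(2πθ)/D`, the function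
`Δ₁(θ) = √2 π sin(2πθ) sin(4πθ)/((a − 144cπ⁴)D)` is 1-periodic and satisfies
`aνΔ₁ + (1 − bν)Δ₁'' + cνΔ₁⁗ = (Δ₀')³ + 3Δ₀Δ₀'Δ₀''`. -/
theorem stmt_14 (a b c : ℝ)
    (hD : 0 < a + 4 * b * π ^ 2 + 16 * c * π ^ 4)
    (hne : a ≠ 144 * c * π ^ 4)
    (ν D : ℝ)
    (hν : ν = 4 * π ^ 2 / (a + 4 * b * π ^ 2 + 16 * c * π ^ 4))
    (hDdef : D = Real.sqrt (a + 4 * b * π ^ 2 + 16 * c * π ^ 4))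
    (Δ₀ Δ₁ : ℝ → ℝ)
    (hΔ₀ : ∀ θ, Δ₀ θ = Real.sqrt 2 * Real.sin (2 * π * θ) / D)
    (hΔ₁ : ∀ θ, Δ₁ θ = Real.sqrt 2 * π * Real.sin (2 * π * θ) * Real.sin (4 * π * θ)
      / ((a - 144 * c * π ^ 4) * D)) :
    Function.Periodic Δ₁ 1 ∧
    ∀ θ : ℝ, a * ν * Δ₁ θ + (1 - b * ν) * iteratedDeriv 2 Δ₁ θ
        + c * ν * iteratedDeriv 4 Δ₁ θ
      = (deriv Δ₀ θ) ^ 3 + 3 * Δ₀ θ * deriv Δ₀ θ * iteratedDeriv 2 Δ₀ θ := by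
  have hD0 : D ≠ 0 := hDdef ▸ (sqrt_pos.mpr hD).ne'
  have hD2 : D ^ 2 = a + 4 * b * π ^ 2 + 16 * c * π ^ 4 := hDdef ▸ sq_sqrt hD.le
  have hE : a - 144 * c * π ^ 4 ≠ 0 := sub_ne_zero.mpr hne
  have hΔ₀' : Δ₀ = fun θ => √2 / D * sin (2 * π * θ) := funext fun θ => (hΔ₀ θ).trans (by ring)
  have hΔ₁' : Δ₁ = fun θ => √2 * π / (2 * ((a - 144 * c * π ^ 4) * D))
      * (cos (2 * π * θ) - cos (3 * (2 * π) * θ)) := by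
    funext θ
    rw [hΔ₁, mul_assoc 3, cos_sub_cos_three_mul, ← mul_assoc 2 (2 * π),
      show 2 * (2 * π) = 4 * π by ring]
    field_simp
  refine ⟨fun θ => ?_, fun θ => ?_⟩
  · exact hΔ₁' ▸ periodic_cos_sub_cos_three_mul _ θ
  change fourthOrderOp (a * ν) (1 - b * ν) (c * ν) Δ₁ θ = _
  rw [hΔ₁', fourthOrderOp_const_mul, fourthOrderOp_sub _ _ _ (by fun_prop) (by fun_prop),
    fourthOrderOp_cos_mul, fourthOrderOp_cos_mul, hΔ₀', sin_mode_cubic]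
  have hνD : ν * (a + 4 * b * π ^ 2 + 16 * c * π ^ 4) = 4 * π ^ 2 := by
    rw [hν]; exact div_mul_cancel₀ _ hD.ne'
  have hker : a * ν - (1 - b * ν) * (2 * π) ^ 2 + c * ν * (2 * π) ^ 4 = 0 := by
    linear_combination hνD
  have hthird : a * ν - (1 - b * ν) * (3 * (2 * π)) ^ 2 + c * ν * (3 * (2 * π)) ^ 4
      = -8 * ν * (a - 144 * c * π ^ 4) := by
    linear_combination 9 * hνD
  rw [hker, hthird, hν, ← hD2, zero_mul, zero_sub]
  generalize a - 144 * c * π ^ 4 = E at hE ⊢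
  field_simp
  rw [sq_sqrt zero_le_two]
  ring
end

section
/- Let b ≥ 0 and σ > 0, and define λ : [−1, 1] → ℝ by λ(K) := −1/(b + 4π²) + (σ⁴/4)·(4K⁴ + 10K² + 1)/(4π²(b + 4π²)³). Then the derivative of λ has exactly one real root, at K = 0, and λ attains its unique global minimum on [−1, 1] at K = 0; the minimum value is λ(0) = −1/(b + 4π²) + σ⁴/(16π²(b + 4π²)³). In particular, among the family of candidate phase resetting curves indexed by K, the Type II curve (K = 0) minimizes the Lyapunov exponent. -/
open Real

/-! With `B = b + 4π²` and `c = σ⁴/(16π²B³) > 0` one has `λ(K) = 4c K⁴ + 10c K² + (c − 1/B)`,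
an even quartic with positive coefficients of `K⁴` and `K²`. Its derivative `2K(8cK² + 10c)`
vanishes only at `K = 0`, and both nonconstant terms are positive for `K ≠ 0`. -/

theorem hasDerivAt_biquadratic (α β γ K : ℝ) :
    HasDerivAt (fun x : ℝ => α * x ^ 4 + β * x ^ 2 + γ) (4 * α * K ^ 3 + 2 * β * K) K := by
  refine ((((hasDerivAt_pow 4 K).const_mul α).add
    ((hasDerivAt_pow 2 K).const_mul β)).add_const γ).congr_deriv ?_
  norm_num
  ring

section Biquadratic

variable {α β : ℝ} (γ : ℝ)

theorem deriv_biquadratic_eq_zero_iff (hα : 0 ≤ α) (hβ : 0 < β) (K : ℝ) :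
    deriv (fun x : ℝ => α * x ^ 4 + β * x ^ 2 + γ) K = 0 ↔ K = 0 := by
  have hfactor : 4 * α * K ^ 3 + 2 * β * K = 2 * K * (2 * α * K ^ 2 + β) := by ring
  have hpos : 0 < 2 * α * K ^ 2 + β := by positivity
  rw [(hasDerivAt_biquadratic α β γ K).deriv, hfactor]
  simp [hpos.ne']

theorem biquadratic_lt_of_ne_zero (hα : 0 ≤ α) (hβ : 0 < β) {K : ℝ} (hK : K ≠ 0) :
    γ < α * K ^ 4 + β * K ^ 2 + γ := by
  have : 0 < β * K ^ 2 := by positivity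
  have : 0 ≤ α * K ^ 4 := by positivity
  linarith

end Biquadratic

/-- For `b ≥ 0`, `σ > 0` and
`λ(K) = −1/(b + 4π²) + (σ⁴/4)(4K⁴ + 10K² + 1)/(4π²(b + 4π²)³)`, the derivative of
`λ` has exactly one real root, at `K = 0`; `λ` attains its unique global minimum on
`[−1,1]` at `K = 0`; and the minimum value is
`λ(0) = −1/(b + 4π²) + σ⁴/(16π²(b + 4π²)³)`. -/
theorem stmt_19 (b σ : ℝ) (hb : 0 ≤ b) (hσ : 0 < σ)
    (lam : ℝ → ℝ)
    (hlam : ∀ K : ℝ, lam K = -1 / (b + 4 * π ^ 2)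
      + σ ^ 4 / 4 * (4 * K ^ 4 + 10 * K ^ 2 + 1) / (4 * π ^ 2 * (b + 4 * π ^ 2) ^ 3)) :
    (∀ K : ℝ, deriv lam K = 0 ↔ K = 0) ∧
    (∀ K ∈ Set.Icc (-1 : ℝ) 1, K ≠ 0 → lam 0 < lam K) ∧
    lam 0 = -1 / (b + 4 * π ^ 2) + σ ^ 4 / (16 * π ^ 2 * (b + 4 * π ^ 2) ^ 3) := by
  set B := b + 4 * π ^ 2
  have hB : 0 < B := by positivity
  set c := σ ^ 4 / (16 * π ^ 2 * B ^ 3)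
  have hc : 0 < c := by positivity
  have hlam_eq : lam = fun K => 4 * c * K ^ 4 + 10 * c * K ^ 2 + (-1 / B + c) := by
    funext K
    rw [hlam K]
    simp only [c]
    field_simp
    ring
  subst hlam_eq
  have h4c : 0 ≤ 4 * c := by positivity
  have h10c : 0 < 10 * c := by positivity
  refine ⟨deriv_biquadratic_eq_zero_iff _ h4c h10c, fun K _ hK => ?_, ?_⟩
  · simpa using biquadratic_lt_of_ne_zero (-1 / B + c) h4c h10c hK
  · simp
end
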